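/- arXiv:math/0611331 — 2 statements merged into one kernel-verified Lean document; each statement's English description precedes it below -/
import Mathlib

section
/- For every n ≥ 2, the lamplighter group Lₙ = (ℤ/n)≀ℤ, equipped with the word metric for the generating set (ℤ/n ∖ {0}) ∪ {t} where t generates ℤ, has Assouad-Nagata dimension 1. -/
open Function SemidirectProduct ENNReal

noncomputable section

/-- Word length of `g` with respect to a symmetrized generating set `S`. -/
def wordLength {G : Type*} [Group G] (S : Set G) (g : G) : ℕ :=
  sInf {m | ∃ w : List G, w.length = m ∧ (∀ x ∈ w, x ∈ S ∨ x⁻¹ ∈ S) ∧ w.prod = g}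

/-- The word metric on a group. -/
def wordDist {G : Type*} [Group G] (S : Set G) (g h : G) : ℝ :=
  wordLength S (g⁻¹ * h)

/-- Growth function: the number of elements in the open ball `B(1,r)` of the word metric. -/
def growth {G : Type*} [Group G] (S : Set G) (r : ℝ) : ℕ :=
  Nat.card {g : G | (wordLength S g : ℝ) < r}

/-- `x` and `y` are in the same `r`-component of `A ⊆ X` (distance function `d`):
they are joined by an `r`-path inside `A`. -/
def ChainIn {X : Type*} (d : X → X → ℝ) (A : Set X) (r : ℝ) (x y : X) : Prop :=
  ∃ (m : ℕ) (c : Fin (m + 1) → X), (∀ i, c i ∈ A) ∧ c 0 = x ∧ c (Fin.last m) = y ∧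
    ∀ i : Fin m, d (c i.castSucc) (c i.succ) < r

/-- `D` is an `n`-dimensional control function for the distance function `d` on `X`:
for every `r > 0` there is a cover by `n+1` sets of Lebesgue number at least `r`
whose `r`-components have diameter at most `D r`. -/
def IsControlFunction {X : Type*} (d : X → X → ℝ) (n : ℕ) (D : ℝ → ℝ≥0∞) : Prop :=
  ∀ r : ℝ, 0 < r → ∃ P : Fin (n + 1) → Set X,
    (⋃ i, P i) = Set.univ ∧
    (∀ x : X, ∃ i, {y | d x y < r} ⊆ P i) ∧
    ∀ i, ∀ x ∈ P i, ∀ y ∈ P i, ChainIn d (P i) r x y → ENNReal.ofReal (d x y) ≤ D r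

/-- `dim_AN(X,d) ≤ n`: there is an `n`-dimensional control function which is a dilation. -/
def ANdimLE {X : Type*} (d : X → X → ℝ) (n : ℕ) : Prop :=
  ∃ C : ℝ, 0 < C ∧ IsControlFunction d n fun r => ENNReal.ofReal (C * r)

/-- `f` weakly dominates `g`. -/
def WeaklyDominates (f g : ℝ → ℝ) : Prop :=
  ∃ lam C : ℝ, 1 ≤ lam ∧ 0 ≤ C ∧ ∀ t : ℝ, 0 ≤ t → g t ≤ lam * f (lam * t + C) + C

/-- The base group of the restricted wreath product `H ≀ G`:
finitely supported functions `G → H` under pointwise multiplication. -/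
def WreathBase (H G : Type*) [Group H] [Group G] : Subgroup (G → H) where
  carrier := {f | (Function.mulSupport f).Finite}
  one_mem' := by simp [Function.mulSupport_one]
  mul_mem' {a b} ha hb := ((ha.union hb).subset (Function.mulSupport_mul a b))
  inv_mem' {a} ha := by simpa [Function.mulSupport_inv] using ha

variable (H G : Type*) [Group H] [Group G]

/-- The shift action of `b : G` on the base group, `(b • f) γ = f (b⁻¹ γ)`. -/
def wreathShift (b : G) : WreathBase H G ≃* WreathBase H G where
  toFun f := ⟨fun x => f.1 (b⁻¹ * x), by
    have h : Function.mulSupport (fun x => f.1 (b⁻¹ * x)) ⊆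
        (fun x : G => b⁻¹ * x) ⁻¹' Function.mulSupport f.1 := fun x hx => hx
    exact (f.2.preimage ((mul_right_injective b⁻¹).injOn)).subset h⟩
  invFun f := ⟨fun x => f.1 (b * x), by
    have h : Function.mulSupport (fun x => f.1 (b * x)) ⊆
        (fun x : G => b * x) ⁻¹' Function.mulSupport f.1 := fun x hx => hx
    exact (f.2.preimage ((mul_right_injective b).injOn)).subset h⟩
  left_inv f := by ext x; simp
  right_inv f := by ext x; simp
  map_mul' f g := rfl

/-- The action of `G` on the base group of the wreath product. -/
def wreathAct : G →* MulAut (WreathBase H G) where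
  toFun := wreathShift H G
  map_one' := by
    refine MulEquiv.ext fun f => Subtype.ext (funext fun x => ?_)
    simp [wreathShift]
  map_mul' a b := by
    refine MulEquiv.ext fun f => Subtype.ext (funext fun x => ?_)
    simp [wreathShift, mul_assoc]

/-- The restricted wreath product `H ≀ G`. -/
abbrev Wreath := WreathBase H G ⋊[wreathAct H G] G

/-- The element of the base group supported at `1` with value `a`. -/
def atOne (a : H) : WreathBase H G :=
  letI := Classical.decEq G
  ⟨fun x => if x = 1 then a else 1, Set.Finite.subset (Set.finite_singleton 1) (by
    intro x hx
    simp only [Function.mem_mulSupport] at hx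
    simp only [Set.mem_singleton_iff]
    by_contra h
    exact hx (if_neg h))⟩

/-- The `(g,a)`-bulb `g·a·g⁻¹` in `H ≀ G`. -/
def bulb (g : G) (a : H) : Wreath H G :=
  inr g * inl (atOne H G a) * (inr g)⁻¹

/-- The generating set `(H ∖ {1}) ∪ S` of `H ≀ G`. -/
def wreathGen (S : Set G) : Set (Wreath H G) :=
  {w | ∃ a : H, a ≠ 1 ∧ w = inl (atOne H G a)} ∪ {w | ∃ s ∈ S, w = inr s}

/-- The word metric on `H ≀ G` with respect to the generating set `(H ∖ {1}) ∪ S`. -/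
def wreathDist (S : Set G) (x y : Wreath H G) : ℝ :=
  wordLength (wreathGen H G S) (x⁻¹ * y)

/-- The metric on the kernel `K` of `H ≀ G → G` induced from the word metric on `H ≀ G`. -/
def kerDist (S : Set G) (x y : (rightHom : Wreath H G →* G).ker) : ℝ :=
  wreathDist H G S x.1 y.1



/-! ### Auxiliary development for Statement 16 -/

namespace Statement16

open Multiplicative

variable {H : Type*} [Group H]

/-- The distinguished generator of `Multiplicative ℤ`. -/
def tgen : Multiplicative ℤ := Multiplicative.ofAdd (1 : ℤ)

/-- The generating set of the lamplighter-type group. -/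
def SS (H : Type*) [Group H] : Set (Wreath H (Multiplicative ℤ)) :=
  wreathGen H (Multiplicative ℤ) {Multiplicative.ofAdd (1 : ℤ)}

/-- The `ℤ`-coordinate. -/
def kk (x : Wreath H (Multiplicative ℤ)) : ℤ := Multiplicative.toAdd x.right

lemma atOne_apply (a : H) (p : Multiplicative ℤ) :
    (atOne H (Multiplicative ℤ) a).1 p = if p = 1 then a else 1 := by
  simp only [atOne]
  congr

lemma atOne_inv (a : H) :
    (atOne H (Multiplicative ℤ) a)⁻¹ = atOne H (Multiplicative ℤ) a⁻¹ := by
  refine Subtype.ext (funext fun p => ?_)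
  show ((atOne H (Multiplicative ℤ) a).1 p)⁻¹ = (atOne H (Multiplicative ℤ) a⁻¹).1 p
  rw [atOne_apply, atOne_apply]
  split <;> simp

lemma wreathAct_apply (b : Multiplicative ℤ) (f : WreathBase H (Multiplicative ℤ))
    (p : Multiplicative ℤ) :
    ((wreathAct H (Multiplicative ℤ) b f : WreathBase H (Multiplicative ℤ)) :
      Multiplicative ℤ → H) p = (f : Multiplicative ℤ → H) (b⁻¹ * p) := rfl

lemma letter_cases (x : Wreath H (Multiplicative ℤ))
    (hx : x ∈ SS H ∨ x⁻¹ ∈ SS H) :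
    (∃ a : H, x = inl (atOne H (Multiplicative ℤ) a)) ∨ x = inr tgen ∨ x = inr tgen⁻¹ := by
  rcases hx with hx | hx
  · rcases hx with ⟨a, -, rfl⟩ | ⟨s, hs, rfl⟩
    · exact Or.inl ⟨a, rfl⟩
    · rcases Set.mem_singleton_iff.mp hs with rfl
      exact Or.inr (Or.inl rfl)
  · rcases hx with ⟨a, -, ha⟩ | ⟨s, hs, hs'⟩
    · refine Or.inl ⟨a⁻¹, ?_⟩
      rw [← inv_inv x, ha, ← map_inv, atOne_inv]
    · rcases Set.mem_singleton_iff.mp hs with rfl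
      refine Or.inr (Or.inr ?_)
      rw [← inv_inv x, hs', ← map_inv]
      rfl

lemma one_left_apply (p : Multiplicative ℤ) :
    ((1 : Wreath H (Multiplicative ℤ)).left : Multiplicative ℤ → H) p = 1 := rfl

/-- Key bounds satisfied by products of generator words. -/
lemma word_bound : ∀ (w : List (Wreath H (Multiplicative ℤ))),
    (∀ x ∈ w, x ∈ SS H ∨ x⁻¹ ∈ SS H) →
    (Multiplicative.toAdd (w.prod.right)).natAbs ≤ w.length ∧
      ∀ p : Multiplicative ℤ, (w.prod.left : Multiplicative ℤ → H) p ≠ 1 →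
        (Multiplicative.toAdd p).natAbs < w.length := by
  intro w
  induction w with
  | nil =>
    intro _
    constructor
    · simp
    · intro p hp
      exact absurd (one_left_apply p) hp
  | cons a w ih =>
    intro hlet
    obtain ⟨ih1, ih2⟩ := ih (fun x hx => hlet x (List.mem_cons_of_mem a hx))
    have ha := letter_cases a (hlet a List.mem_cons_self)
    rw [List.prod_cons]
    rcases ha with ⟨u, rfl⟩ | rfl | rfl
    · constructor
      · simpa using ih1.trans (Nat.le_succ _)
      · intro p hp
        have hmul : ((inl (atOne H (Multiplicative ℤ) u) * w.prod).left :
            Multiplicative ℤ → H) p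
            = (atOne H (Multiplicative ℤ) u).1 p *
              (w.prod.left : Multiplicative ℤ → H) ((1 : Multiplicative ℤ)⁻¹ * p) := rfl
        rw [inv_one, one_mul] at hmul
        rw [hmul] at hp
        by_cases h1 : (w.prod.left : Multiplicative ℤ → H) p = 1
        · rw [h1, mul_one] at hp
          rw [atOne_apply] at hp
          have : p = 1 := by by_contra hne; exact hp (if_neg hne)
          subst this
          simp
        · have := ih2 p h1
          rw [List.length_cons]
          omega
    · constructor
      · have : Multiplicative.toAdd ((inr tgen * w.prod :
            Wreath H (Multiplicative ℤ)).right) = 1 + Multiplicative.toAdd w.prod.right := by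
          simp [tgen]
        rw [this, List.length_cons]
        calc (1 + Multiplicative.toAdd w.prod.right).natAbs
            ≤ (1 : ℤ).natAbs + (Multiplicative.toAdd w.prod.right).natAbs :=
              Int.natAbs_add_le _ _
          _ ≤ 1 + w.length := by omega
          _ = w.length + 1 := by omega
      · intro p hp
        have hmul : ((inr tgen * w.prod : Wreath H (Multiplicative ℤ)).left :
            Multiplicative ℤ → H) p
            = 1 * (w.prod.left : Multiplicative ℤ → H) (tgen⁻¹ * p) := rfl
        rw [one_mul] at hmul
        rw [hmul] at hp
        have := ih2 _ hp
        have harith : (Multiplicative.toAdd (tgen⁻¹ * p)).natAbs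
            = (-1 + Multiplicative.toAdd p).natAbs := by
          simp [tgen]
        rw [harith] at this
        rw [List.length_cons]
        omega
    · constructor
      · have : Multiplicative.toAdd ((inr tgen⁻¹ * w.prod :
            Wreath H (Multiplicative ℤ)).right) = -1 + Multiplicative.toAdd w.prod.right := by
          simp [tgen]
        rw [this, List.length_cons]
        calc (-1 + Multiplicative.toAdd w.prod.right).natAbs
            ≤ (-1 : ℤ).natAbs + (Multiplicative.toAdd w.prod.right).natAbs :=
              Int.natAbs_add_le _ _
          _ ≤ 1 + w.length := by omega
          _ = w.length + 1 := by omega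
      · intro p hp
        have hmul : ((inr tgen⁻¹ * w.prod : Wreath H (Multiplicative ℤ)).left :
            Multiplicative ℤ → H) p
            = 1 * (w.prod.left : Multiplicative ℤ → H) (tgen⁻¹⁻¹ * p) := rfl
        rw [one_mul, inv_inv] at hmul
        rw [hmul] at hp
        have := ih2 _ hp
        have harith : (Multiplicative.toAdd (tgen * p)).natAbs
            = (1 + Multiplicative.toAdd p).natAbs := by
          simp [tgen]
        rw [harith] at this
        rw [List.length_cons]
        omega

lemma mul_left_apply (x y : Wreath H (Multiplicative ℤ)) (p : Multiplicative ℤ) :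
    ((x * y).left : Multiplicative ℤ → H) p
      = (x.left : Multiplicative ℤ → H) p *
        (y.left : Multiplicative ℤ → H) (x.right⁻¹ * p) := rfl

lemma inr_left_apply (c : Multiplicative ℤ) (p : Multiplicative ℤ) :
    ((inr c : Wreath H (Multiplicative ℤ)).left : Multiplicative ℤ → H) p = 1 := rfl

lemma kk_inv_mul (x y : Wreath H (Multiplicative ℤ)) : kk (x⁻¹ * y) = kk y - kk x := by
  show Multiplicative.toAdd ((x⁻¹ * y).right) = _
  rw [mul_right, inv_right]
  rw [toAdd_mul, toAdd_inv]
  show -kk x + kk y = kk y - kk x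
  ring

open scoped Classical in
/-- Optional lamp letter. -/
def lampIf (f : Multiplicative ℤ → H) (j : ℤ) : List (Wreath H (Multiplicative ℤ)) :=
  if f (Multiplicative.ofAdd j) = 1 then []
  else [inl (atOne H (Multiplicative ℤ) (f (Multiplicative.ofAdd j)))]

/-- The sweeping word switching on the lamps `f` on `[0, N)` while moving from `0` to `N`. -/
def sweepWord (f : Multiplicative ℤ → H) (N : ℕ) : List (Wreath H (Multiplicative ℤ)) :=
  (List.range N).flatMap fun j => lampIf f (j : ℤ) ++ [inr tgen]

lemma lampIf_length (f : Multiplicative ℤ → H) (j : ℤ) : (lampIf f j).length ≤ 1 := by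
  rw [lampIf]
  split_ifs <;> simp

lemma sweep_succ (f : Multiplicative ℤ → H) (N : ℕ) :
    sweepWord f (N + 1) = sweepWord f N ++ (lampIf f (N : ℤ) ++ [inr tgen]) := by
  simp [sweepWord, List.range_succ, List.flatMap_append]

lemma sweep_letters (f : Multiplicative ℤ → H) (N : ℕ) :
    ∀ x ∈ sweepWord f N, x ∈ SS H ∨ x⁻¹ ∈ SS H := by
  intro x hx
  rw [sweepWord, List.mem_flatMap] at hx
  obtain ⟨j, -, hx⟩ := hx
  rw [List.mem_append] at hx
  left
  rcases hx with hx | hx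
  · rw [lampIf] at hx
    split_ifs at hx with h
    · simp at hx
    · rcases List.mem_singleton.mp hx with rfl
      exact Or.inl ⟨_, h, rfl⟩
  · rcases List.mem_singleton.mp hx with rfl
    exact Or.inr ⟨Multiplicative.ofAdd 1, rfl, rfl⟩

lemma sweep_length (f : Multiplicative ℤ → H) (N : ℕ) :
    (sweepWord f N).length ≤ 2 * N := by
  induction N with
  | zero => simp [sweepWord]
  | succ N ih =>
    rw [sweep_succ, List.length_append, List.length_append]
    have := lampIf_length f (N : ℤ)
    have h1 : ([inr tgen] : List (Wreath H (Multiplicative ℤ))).length = 1 := rfl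
    omega

lemma sweep_spec (f : Multiplicative ℤ → H) (N : ℕ) :
    Multiplicative.toAdd ((sweepWord f N).prod.right) = (N : ℤ) ∧
    ∀ p : Multiplicative ℤ, ((sweepWord f N).prod.left : Multiplicative ℤ → H) p
      = if 0 ≤ Multiplicative.toAdd p ∧ Multiplicative.toAdd p < (N : ℤ) then f p else 1 := by
  induction N with
  | zero =>
    constructor
    · simp [sweepWord]
    · intro p
      rw [if_neg (by omega)]
      show ((1 : Wreath H (Multiplicative ℤ)).left : Multiplicative ℤ → H) p = 1
      rfl
  | succ N ih =>
    obtain ⟨ih1, ih2⟩ := ih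
    set B : Wreath H (Multiplicative ℤ) := (lampIf f (N : ℤ) ++ [inr tgen]).prod with hB
    have hBright : B.right = tgen := by
      rw [hB, lampIf]
      split_ifs
      · simp
      · rw [List.singleton_append, List.prod_cons, List.prod_singleton, mul_right, right_inl,
          one_mul]
        rfl
    have hBleft : ∀ q : Multiplicative ℤ,
        (B.left : Multiplicative ℤ → H) q
          = if q = 1 then f (Multiplicative.ofAdd (N : ℤ)) else 1 := by
      intro q
      by_cases h : f (Multiplicative.ofAdd (N : ℤ)) = 1
      · rw [hB, lampIf, if_pos h, List.nil_append, List.prod_singleton, inr_left_apply]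
        by_cases hq : q = 1
        · rw [if_pos hq, h]
        · rw [if_neg hq]
      · rw [hB, lampIf, if_neg h, List.singleton_append, List.prod_cons, List.prod_singleton,
          mul_left_apply, inr_left_apply, mul_one]
        have h2 : ((inl (atOne H (Multiplicative ℤ) (f (Multiplicative.ofAdd (N : ℤ)))) :
            Wreath H (Multiplicative ℤ)).left : Multiplicative ℤ → H) q
            = (atOne H (Multiplicative ℤ) (f (Multiplicative.ofAdd (N : ℤ)))).1 q := rfl
        rw [h2, atOne_apply]
    have hsub : (sweepWord f (N + 1)).prod = (sweepWord f N).prod * B := by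
      rw [sweep_succ, List.prod_append]
    set P : Wreath H (Multiplicative ℤ) := (sweepWord f N).prod with hP
    constructor
    · rw [hsub, mul_right, toAdd_mul, ih1, hBright]
      show (N : ℤ) + (1 : ℤ) = ((N + 1 : ℕ) : ℤ)
      push_cast
      ring
    · intro p
      rw [hsub, mul_left_apply, ih2 p, hBleft]
      have hq : Multiplicative.toAdd (P.right⁻¹ * p)
          = -(N : ℤ) + Multiplicative.toAdd p := by
        rw [toAdd_mul, toAdd_inv, ih1]
      by_cases hN : Multiplicative.toAdd p = (N : ℤ)
      · have hq1 : P.right⁻¹ * p = 1 := by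
          apply Multiplicative.toAdd.injective
          rw [toAdd_one, hq, hN]
          ring
        rw [if_pos hq1, if_neg (by omega), one_mul]
        have hp : p = Multiplicative.ofAdd (N : ℤ) := by
          apply Multiplicative.toAdd.injective
          rw [hN, toAdd_ofAdd]
        rw [if_pos (by refine ⟨by omega, ?_⟩; push_cast; omega)]
        rw [hp]
      · have hq1 : P.right⁻¹ * p ≠ 1 := by
          intro hcon
          rw [hcon, toAdd_one] at hq
          omega
        rw [if_neg hq1, mul_one]
        have hiff : (0 ≤ Multiplicative.toAdd p ∧ Multiplicative.toAdd p < (N : ℤ)) ↔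
            (0 ≤ Multiplicative.toAdd p ∧ Multiplicative.toAdd p < ((N + 1 : ℕ) : ℤ)) := by
          push_cast
          omega
        by_cases h1 : 0 ≤ Multiplicative.toAdd p ∧ Multiplicative.toAdd p < (N : ℤ)
        · rw [if_pos h1, if_pos (hiff.mp h1)]
        · rw [if_neg h1, if_neg (fun hc => h1 (hiff.mpr hc))]

/-- The word `t^e`. -/
def repWord (H : Type*) [Group H] (e : ℤ) : List (Wreath H (Multiplicative ℤ)) :=
  if 0 ≤ e then List.replicate e.toNat (inr tgen) else List.replicate (-e).toNat (inr tgen⁻¹)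

lemma rep_letters (e : ℤ) : ∀ x ∈ repWord H e, x ∈ SS H ∨ x⁻¹ ∈ SS H := by
  intro x hx
  rw [repWord] at hx
  have htg : (inr tgen : Wreath H (Multiplicative ℤ)) ∈ SS H :=
    Or.inr ⟨Multiplicative.ofAdd 1, rfl, rfl⟩
  split_ifs at hx
  · rcases List.eq_of_mem_replicate hx with rfl
    exact Or.inl htg
  · rcases List.eq_of_mem_replicate hx with rfl
    right
    rw [← map_inv, inv_inv]
    exact htg

lemma rep_length (e : ℤ) : (repWord H e).length = e.natAbs := by
  rw [repWord]
  split_ifs <;> rw [List.length_replicate] <;> omega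

lemma rep_prod (e : ℤ) : (repWord H e).prod = inr (Multiplicative.ofAdd e) := by
  rw [repWord]
  split_ifs with h
  · rw [List.prod_replicate, ← map_pow]
    congr 1
    apply Multiplicative.toAdd.injective
    rw [toAdd_pow, toAdd_ofAdd]
    show (e.toNat : ℤ) • Multiplicative.toAdd tgen = e
    rw [tgen, toAdd_ofAdd, smul_eq_mul, mul_one]
    omega
  · rw [List.prod_replicate, ← map_pow]
    congr 1
    apply Multiplicative.toAdd.injective
    rw [toAdd_pow, toAdd_ofAdd]
    show ((-e).toNat : ℤ) • Multiplicative.toAdd tgen⁻¹ = e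
    rw [toAdd_inv, tgen, toAdd_ofAdd, smul_eq_mul]
    omega

/-- Explicit word representing an element with controlled support. -/
lemma exists_word (g : Wreath H (Multiplicative ℤ)) (A : ℕ)
    (hA : ∀ p : Multiplicative ℤ, (g.left : Multiplicative ℤ → H) p ≠ 1 →
      (Multiplicative.toAdd p).natAbs < A) :
    ∃ w : List (Wreath H (Multiplicative ℤ)),
      w.length ≤ 6 * A + (kk g).natAbs ∧ (∀ x ∈ w, x ∈ SS H ∨ x⁻¹ ∈ SS H) ∧ w.prod = g := by
  classical
  set f : Multiplicative ℤ → H :=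
    fun p => (g.left : Multiplicative ℤ → H) (Multiplicative.ofAdd (-(A : ℤ)) * p) with hf
  set w : List (Wreath H (Multiplicative ℤ)) :=
    repWord H (-(A : ℤ)) ++ (sweepWord f (2 * A) ++ repWord H (kk g - A)) with hw
  obtain ⟨hs1, hs2⟩ := sweep_spec f (2 * A)
  refine ⟨w, ?_, ?_, ?_⟩
  · rw [hw, List.length_append, List.length_append, rep_length, rep_length]
    have := sweep_length f (2 * A)
    omega
  · intro x hx
    rw [hw, List.mem_append, List.mem_append] at hx
    rcases hx with hx | hx | hx
    · exact rep_letters _ x hx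
    · exact sweep_letters f (2 * A) x hx
    · exact rep_letters _ x hx
  · rw [hw, List.prod_append, List.prod_append, rep_prod, rep_prod]
    set P : Wreath H (Multiplicative ℤ) := (sweepWord f (2 * A)).prod with hP
    refine SemidirectProduct.ext ?_ ?_
    · refine Subtype.ext (funext fun p => ?_)
      rw [mul_left_apply, mul_left_apply, inr_left_apply, inr_left_apply, mul_one, one_mul]
      have hr : ((inr (Multiplicative.ofAdd (-(A : ℤ))) :
          Wreath H (Multiplicative ℤ)).right)⁻¹ * p = Multiplicative.ofAdd ((A : ℤ)) * p := by
        show (Multiplicative.ofAdd (-(A : ℤ)))⁻¹ * p = _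
        congr 1
        apply Multiplicative.toAdd.injective
        rw [toAdd_inv, toAdd_ofAdd, toAdd_ofAdd]
        ring
      rw [hr, hs2]
      have htq : Multiplicative.toAdd (Multiplicative.ofAdd ((A : ℤ)) * p)
          = (A : ℤ) + Multiplicative.toAdd p := by
        rw [toAdd_mul, toAdd_ofAdd]
      have hfq : f (Multiplicative.ofAdd ((A : ℤ)) * p) = (g.left : Multiplicative ℤ → H) p := by
        show (g.left : Multiplicative ℤ → H)
          (Multiplicative.ofAdd (-(A : ℤ)) * (Multiplicative.ofAdd ((A : ℤ)) * p))
          = (g.left : Multiplicative ℤ → H) p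
        congr 1
        rw [← mul_assoc, ← ofAdd_add]
        simp
      by_cases hcond : 0 ≤ Multiplicative.toAdd (Multiplicative.ofAdd ((A : ℤ)) * p) ∧
          Multiplicative.toAdd (Multiplicative.ofAdd ((A : ℤ)) * p) < ((2 * A : ℕ) : ℤ)
      · rw [if_pos hcond, hfq]
      · rw [if_neg hcond]
        rw [htq] at hcond
        push_cast at hcond
        by_contra hne
        have := hA p fun h1 => hne (h1.symm)
        omega
    · rw [mul_right, mul_right, right_inr, right_inr]
      apply Multiplicative.toAdd.injective
      rw [toAdd_mul, toAdd_mul, toAdd_ofAdd, toAdd_ofAdd, hs1]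
      show -(A : ℤ) + (((2 * A : ℕ) : ℤ) + (kk g - A)) = Multiplicative.toAdd g.right
      push_cast
      show _ = kk g
      ring

lemma wordLength_le (g : Wreath H (Multiplicative ℤ)) (A : ℕ)
    (hA : ∀ p : Multiplicative ℤ, (g.left : Multiplicative ℤ → H) p ≠ 1 →
      (Multiplicative.toAdd p).natAbs < A) :
    wordLength (SS H) g ≤ 6 * A + (kk g).natAbs := by
  obtain ⟨w, hlen, hlet, hprod⟩ := exists_word g A hA
  exact le_trans (Nat.sInf_le ⟨w, rfl, hlet, hprod⟩) hlen

lemma exists_bound (g : Wreath H (Multiplicative ℤ)) :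
    ∃ A : ℕ, ∀ p : Multiplicative ℤ, (g.left : Multiplicative ℤ → H) p ≠ 1 →
      (Multiplicative.toAdd p).natAbs < A := by
  have hfin : (Function.mulSupport (g.left : Multiplicative ℤ → H)).Finite := g.left.2
  have himg : ((fun p : Multiplicative ℤ => (Multiplicative.toAdd p).natAbs) ''
      Function.mulSupport (g.left : Multiplicative ℤ → H)).Finite := hfin.image _
  obtain ⟨A, hA⟩ := himg.bddAbove
  exact ⟨A + 1, fun p hp => Nat.lt_succ_of_le (hA ⟨p, hp, rfl⟩)⟩

lemma wset_nonempty (g : Wreath H (Multiplicative ℤ)) :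
    {m | ∃ w : List (Wreath H (Multiplicative ℤ)), w.length = m ∧
      (∀ x ∈ w, x ∈ SS H ∨ x⁻¹ ∈ SS H) ∧ w.prod = g}.Nonempty := by
  obtain ⟨A, hA⟩ := exists_bound g
  obtain ⟨w, -, hlet, hprod⟩ := exists_word g A hA
  exact ⟨w.length, w, rfl, hlet, hprod⟩

lemma exists_min_word (g : Wreath H (Multiplicative ℤ)) :
    ∃ w : List (Wreath H (Multiplicative ℤ)), (∀ x ∈ w, x ∈ SS H ∨ x⁻¹ ∈ SS H) ∧
      w.prod = g ∧ w.length = wordLength (SS H) g := by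
  have := Nat.sInf_mem (wset_nonempty g)
  obtain ⟨w, hlen, hlet, hprod⟩ := this
  exact ⟨w, hlet, hprod, hlen⟩

lemma k_le_wordLength (g : Wreath H (Multiplicative ℤ)) :
    (kk g).natAbs ≤ wordLength (SS H) g := by
  obtain ⟨w, hlet, hprod, hlen⟩ := exists_min_word g
  rw [← hlen, ← hprod]
  exact (word_bound w hlet).1

lemma supp_lt_wordLength (g : Wreath H (Multiplicative ℤ)) (p : Multiplicative ℤ)
    (hp : (g.left : Multiplicative ℤ → H) p ≠ 1) :
    (Multiplicative.toAdd p).natAbs < wordLength (SS H) g := by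
  obtain ⟨w, hlet, hprod, hlen⟩ := exists_min_word g
  rw [← hlen]
  refine (word_bound w hlet).2 p ?_
  rw [hprod]
  exact hp

lemma wordLength_one : wordLength (SS H) (1 : Wreath H (Multiplicative ℤ)) = 0 :=
  Nat.le_zero.mp (Nat.sInf_le ⟨[], rfl, by simp, rfl⟩)

lemma eq_one_of_wordLength_zero (g : Wreath H (Multiplicative ℤ))
    (h : wordLength (SS H) g = 0) : g = 1 := by
  have := Nat.sInf_mem (wset_nonempty g)
  rw [show sInf {m | ∃ w : List (Wreath H (Multiplicative ℤ)), w.length = m ∧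
      (∀ x ∈ w, x ∈ SS H ∨ x⁻¹ ∈ SS H) ∧ w.prod = g} = wordLength (SS H) g from rfl, h] at this
  obtain ⟨w, hlen, -, hprod⟩ := this
  rw [List.length_eq_zero_iff.mp hlen] at hprod
  rw [← hprod, List.prod_nil]

lemma dist_k (x y : Wreath H (Multiplicative ℤ)) :
    (kk y - kk x).natAbs ≤ wordLength (SS H) (x⁻¹ * y) := by
  rw [← kk_inv_mul]
  exact k_le_wordLength _

lemma dist_lamp (u v : Wreath H (Multiplicative ℤ)) (p : Multiplicative ℤ)
    (hp : (u.left : Multiplicative ℤ → H) p ≠ (v.left : Multiplicative ℤ → H) p) :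
    (Multiplicative.toAdd p - kk u).natAbs < wordLength (SS H) (u⁻¹ * v) := by
  have hv : v = u * (u⁻¹ * v) := by group
  have hleft : (v.left : Multiplicative ℤ → H) p
      = (u.left : Multiplicative ℤ → H) p *
        (((u⁻¹ * v).left : Multiplicative ℤ → H)) (u.right⁻¹ * p) := by
    conv_lhs => rw [hv]
    exact mul_left_apply u (u⁻¹ * v) p
  have hne : (((u⁻¹ * v).left : Multiplicative ℤ → H)) (u.right⁻¹ * p) ≠ 1 := by
    intro hcon
    rw [hcon, mul_one] at hleft
    exact hp hleft.symm
  have := supp_lt_wordLength (u⁻¹ * v) _ hne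
  have harith : (Multiplicative.toAdd (u.right⁻¹ * p)).natAbs
      = (Multiplicative.toAdd p - kk u).natAbs := by
    rw [toAdd_mul, toAdd_inv]
    show (-kk u + Multiplicative.toAdd p).natAbs = _
    omega
  rwa [harith] at this

/-- `u` lies in the `m`-th band of width roughly `4r` (with `r`-margins). -/
def inBand (r : ℝ) (m : ℤ) (u : Wreath H (Multiplicative ℤ)) : Prop :=
  4 * r * (m : ℝ) - r ≤ ((kk u : ℤ) : ℝ) ∧ ((kk u : ℤ) : ℝ) < 4 * r * (m : ℝ) + 5 * r

lemma band_unique {r : ℝ} (hr : 0 < r) {m m' : ℤ} (hpar : m % 2 = m' % 2)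
    {u v : Wreath H (Multiplicative ℤ)} (hu : inBand r m u) (hv : inBand r m' v)
    (hd : |((kk v : ℤ) : ℝ) - ((kk u : ℤ) : ℝ)| ≤ r) : m = m' := by
  obtain ⟨hu1, hu2⟩ := hu
  obtain ⟨hv1, hv2⟩ := hv
  obtain ⟨hd1, hd2⟩ := abs_le.mp hd
  by_contra hne
  rcases lt_or_gt_of_ne hne with hlt | hlt
  · have h2 : m + 2 ≤ m' := by omega
    have h2r : ((m : ℝ)) + 2 ≤ (m' : ℝ) := by exact_mod_cast h2
    have h3 : 4 * r * ((m : ℝ) + 2) ≤ 4 * r * (m' : ℝ) :=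
      mul_le_mul_of_nonneg_left h2r (by linarith)
    linarith
  · have h2 : m' + 2 ≤ m := by omega
    have h2r : ((m' : ℝ)) + 2 ≤ (m : ℝ) := by exact_mod_cast h2
    have h3 : 4 * r * ((m' : ℝ) + 2) ≤ 4 * r * (m : ℝ) :=
      mul_le_mul_of_nonneg_left h2r (by linarith)
    linarith

lemma chain_rel {X : Type*} (d : X → X → ℝ) (A : Set X) (r : ℝ) (x y : X)
    (R : X → X → Prop) (hrefl : ∀ u, R u u)
    (htrans : ∀ a b c, R a b → R b c → R a c)
    (hstep : ∀ u ∈ A, ∀ v ∈ A, d u v < r → R u v) :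
    ChainIn d A r x y → R x y := by
  rintro ⟨m, c, hc, h0, hl, hst⟩
  have key : ∀ j : ℕ, ∀ hj : j < m + 1, R x (c ⟨j, hj⟩) := by
    intro j
    induction j with
    | zero =>
      intro hj
      rw [show (⟨0, hj⟩ : Fin (m + 1)) = 0 from rfl, h0]
      exact hrefl x
    | succ j ih =>
      intro hj
      have hjm : j < m + 1 := by omega
      refine htrans _ _ _ (ih hjm) ?_
      have hjlt : j < m := by omega
      have hd := hst ⟨j, hjlt⟩
      exact hstep _ (hc _) _ (hc _) hd
  have hkey := key m (Nat.lt_succ_self m)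
  rw [show (⟨m, Nat.lt_succ_self m⟩ : Fin (m + 1)) = Fin.last m from rfl, hl] at hkey
  exact hkey

end Statement16




open Statement16

/-- For every `n ≥ 2` the lamplighter group `Lₙ = (ℤ/n) ≀ ℤ`, with the word
metric of the generating set `(ℤ/n ∖ {0}) ∪ {t}` where `t` generates `ℤ`, has Assouad-Nagata
dimension `1`. -/
theorem statement_16 (n : ℕ) (hn : 2 ≤ n) :
    ANdimLE (wreathDist (Multiplicative (ZMod n)) (Multiplicative ℤ)
      {Multiplicative.ofAdd (1 : ℤ)}) 1 ∧
    ¬ ANdimLE (wreathDist (Multiplicative (ZMod n)) (Multiplicative ℤ)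
      {Multiplicative.ofAdd (1 : ℤ)}) 0 := by
  classical
  have hd : ∀ x y : Wreath (Multiplicative (ZMod n)) (Multiplicative ℤ),
      wreathDist (Multiplicative (ZMod n)) (Multiplicative ℤ) {Multiplicative.ofAdd (1 : ℤ)} x y
      = (wordLength (SS (Multiplicative (ZMod n))) (x⁻¹ * y) : ℝ) := fun _ _ => rfl
  have hdxx : ∀ x : Wreath (Multiplicative (ZMod n)) (Multiplicative ℤ),
      wreathDist (Multiplicative (ZMod n)) (Multiplicative ℤ)
        {Multiplicative.ofAdd (1 : ℤ)} x x = 0 := by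
    intro x
    rw [hd, inv_mul_cancel, wordLength_one]
    norm_num
  have habs : ∀ x y : Wreath (Multiplicative (ZMod n)) (Multiplicative ℤ),
      |((kk y : ℤ) : ℝ) - ((kk x : ℤ) : ℝ)| ≤
        wreathDist (Multiplicative (ZMod n)) (Multiplicative ℤ)
          {Multiplicative.ofAdd (1 : ℤ)} x y := by
    intro x y
    rw [hd]
    have h1 := dist_k x y
    have h2 : (((kk y - kk x).natAbs : ℕ) : ℝ)
        ≤ (wordLength (SS (Multiplicative (ZMod n))) (x⁻¹ * y) : ℝ) := by exact_mod_cast h1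
    have key : (((kk y - kk x).natAbs : ℕ) : ℝ) = |((kk y : ℤ) : ℝ) - ((kk x : ℤ) : ℝ)| := by
      rw [Nat.cast_natAbs]
      congr 1
      push_cast
      ring
    rw [← key]
    exact h2
  constructor
  · -- upper bound : dimension ≤ 1
    refine ⟨60, by norm_num, ?_⟩
    intro r hr
    by_cases hr1 : r ≤ 1
    · -- trivial cover for small r
      refine ⟨![Set.univ, ∅], ?_, ?_, ?_⟩
      · exact Set.eq_univ_of_forall fun z => Set.mem_iUnion.mpr ⟨0, Set.mem_univ z⟩
      · exact fun x => ⟨0, fun y _ => Set.mem_univ y⟩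
      · intro i x hx y hy hchain
        have hEq : x = y := by
          refine chain_rel _ _ _ x y Eq (fun u => rfl) (fun a b c h1 h2 => h1.trans h2) ?_ hchain
          intro u _ v _ huv
          rw [hd] at huv
          have h0 : wordLength (SS (Multiplicative (ZMod n))) (u⁻¹ * v) = 0 := by
            have h1 : (wordLength (SS (Multiplicative (ZMod n))) (u⁻¹ * v) : ℝ) < 1 :=
              lt_of_lt_of_le huv hr1
            exact Nat.lt_one_iff.mp (by exact_mod_cast h1)
          exact inv_mul_eq_one.mp (eq_one_of_wordLength_zero _ h0)
        rw [← hEq, hdxx x]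
        simp
    · -- main construction
      push_neg at hr1
      have hball : ∀ x : Wreath (Multiplicative (ZMod n)) (Multiplicative ℤ),
          ∃ i : Fin 2, ∀ y, wreathDist (Multiplicative (ZMod n)) (Multiplicative ℤ)
              {Multiplicative.ofAdd (1 : ℤ)} x y < r →
            y ∈ {z : Wreath (Multiplicative (ZMod n)) (Multiplicative ℤ) |
              ∃ m : ℤ, m % 2 = ((i : ℕ) : ℤ) ∧ inBand r m z} := by
        intro x
        set m : ℤ := ⌊((kk x : ℤ) : ℝ) / (4 * r)⌋ with hm
        have h4r : (0 : ℝ) < 4 * r := by linarith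
        have hm1 : 4 * r * (m : ℝ) ≤ ((kk x : ℤ) : ℝ) := by
          have h := Int.floor_le (((kk x : ℤ) : ℝ) / (4 * r))
          calc 4 * r * (m : ℝ) = (m : ℝ) * (4 * r) := by ring
            _ ≤ (((kk x : ℤ) : ℝ) / (4 * r)) * (4 * r) :=
                mul_le_mul_of_nonneg_right h (le_of_lt h4r)
            _ = ((kk x : ℤ) : ℝ) := div_mul_cancel₀ _ (ne_of_gt h4r)
        have hm2 : ((kk x : ℤ) : ℝ) < 4 * r * ((m : ℝ) + 1) := by
          have h := Int.lt_floor_add_one (((kk x : ℤ) : ℝ) / (4 * r))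
          calc ((kk x : ℤ) : ℝ) = (((kk x : ℤ) : ℝ) / (4 * r)) * (4 * r) :=
                (div_mul_cancel₀ _ (ne_of_gt h4r)).symm
            _ < ((m : ℝ) + 1) * (4 * r) := mul_lt_mul_of_pos_right h h4r
            _ = 4 * r * ((m : ℝ) + 1) := by ring
        have hmem : ∀ y, wreathDist (Multiplicative (ZMod n)) (Multiplicative ℤ)
            {Multiplicative.ofAdd (1 : ℤ)} x y < r → inBand r m y := by
          intro y hy
          have h2 := lt_of_le_of_lt (habs x y) hy
          obtain ⟨ha, hb⟩ := abs_lt.mp h2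
          exact ⟨by linarith, by linarith⟩
        rcases Int.emod_two_eq_zero_or_one m with hpar | hpar
        · exact ⟨0, fun y hy => ⟨m, by rw [hpar]; norm_num, hmem y hy⟩⟩
        · exact ⟨1, fun y hy => ⟨m, by rw [hpar]; norm_num, hmem y hy⟩⟩
      refine ⟨fun i => {z : Wreath (Multiplicative (ZMod n)) (Multiplicative ℤ) |
        ∃ m : ℤ, m % 2 = ((i : ℕ) : ℤ) ∧ inBand r m z}, ?_, ?_, ?_⟩
      · refine Set.eq_univ_of_forall fun z => ?_
        obtain ⟨i, hi⟩ := hball z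
        exact Set.mem_iUnion.mpr ⟨i, hi z (by rw [hdxx]; exact hr)⟩
      · intro x
        obtain ⟨i, hi⟩ := hball x
        exact ⟨i, fun y hy => hi y hy⟩
      · intro i x hx y hy hchain
        obtain ⟨m₀, hpar₀, hb₀⟩ := hx
        have hstep : ∀ u ∈ {z : Wreath (Multiplicative (ZMod n)) (Multiplicative ℤ) |
              ∃ m : ℤ, m % 2 = ((i : ℕ) : ℤ) ∧ inBand r m z},
            ∀ v ∈ {z : Wreath (Multiplicative (ZMod n)) (Multiplicative ℤ) |
              ∃ m : ℤ, m % 2 = ((i : ℕ) : ℤ) ∧ inBand r m z},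
            wreathDist (Multiplicative (ZMod n)) (Multiplicative ℤ)
              {Multiplicative.ofAdd (1 : ℤ)} u v < r →
            (inBand r m₀ u → inBand r m₀ v ∧ ∀ p : Multiplicative ℤ,
              (((Multiplicative.toAdd p : ℤ) : ℝ) < 4 * r * (m₀ : ℝ) - 2 * r ∨
                4 * r * (m₀ : ℝ) + 6 * r ≤ ((Multiplicative.toAdd p : ℤ) : ℝ)) →
              (u.left : Multiplicative ℤ → Multiplicative (ZMod n)) p
                = (v.left : Multiplicative ℤ → Multiplicative (ZMod n)) p) := by
          intro u hu v hv huv hIBu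
          obtain ⟨m', hpar', hb'⟩ := hv
          have habs2 : |((kk v : ℤ) : ℝ) - ((kk u : ℤ) : ℝ)| ≤ r :=
            le_of_lt (lt_of_le_of_lt (habs u v) huv)
          rw [hd] at huv
          have hmm : m₀ = m' :=
            band_unique (by linarith) (hpar₀.trans hpar'.symm) hIBu hb' habs2
          rw [← hmm] at hb'
          refine ⟨hb', ?_⟩
          intro p hp
          by_contra hne
          have h1 := dist_lamp u v p hne
          have h2' : (((Multiplicative.toAdd p - kk u).natAbs : ℕ) : ℝ)
              < (wordLength (SS (Multiplicative (ZMod n))) (u⁻¹ * v) : ℝ) := by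
            exact_mod_cast h1
          have h2 : (((Multiplicative.toAdd p - kk u).natAbs : ℕ) : ℝ) < r := lt_trans h2' huv
          have h3 : |((Multiplicative.toAdd p : ℤ) : ℝ) - ((kk u : ℤ) : ℝ)| < r := by
            rw [Nat.cast_natAbs] at h2
            push_cast at h2
            exact h2
          obtain ⟨hu1, hu2⟩ := hIBu
          obtain ⟨h3a, h3b⟩ := abs_lt.mp h3
          rcases hp with hp | hp
          · linarith
          · linarith
        have hR := chain_rel (wreathDist (Multiplicative (ZMod n)) (Multiplicative ℤ)
            {Multiplicative.ofAdd (1 : ℤ)})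
          {z : Wreath (Multiplicative (ZMod n)) (Multiplicative ℤ) |
            ∃ m : ℤ, m % 2 = ((i : ℕ) : ℤ) ∧ inBand r m z} r x y
          (fun u v => inBand r m₀ u → inBand r m₀ v ∧ ∀ p : Multiplicative ℤ,
            (((Multiplicative.toAdd p : ℤ) : ℝ) < 4 * r * (m₀ : ℝ) - 2 * r ∨
              4 * r * (m₀ : ℝ) + 6 * r ≤ ((Multiplicative.toAdd p : ℤ) : ℝ)) →
            (u.left : Multiplicative ℤ → Multiplicative (ZMod n)) p
              = (v.left : Multiplicative ℤ → Multiplicative (ZMod n)) p)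
          (fun u hIB => ⟨hIB, fun p _ => rfl⟩)
          (fun a b c h1 h2 hIB => by
            obtain ⟨hIBb, hl1⟩ := h1 hIB
            obtain ⟨hIBc, hl2⟩ := h2 hIBb
            exact ⟨hIBc, fun p hp => (hl1 p hp).trans (hl2 p hp)⟩)
          hstep hchain
        obtain ⟨hIBy, hlamps⟩ := hR hb₀
        -- final distance estimate
        set A : ℕ := ⌈(7 : ℝ) * r⌉₊ with hA
        have hA1 : (7 : ℝ) * r ≤ (A : ℝ) := Nat.le_ceil _
        have hA2 : (A : ℝ) < 7 * r + 1 := Nat.ceil_lt_add_one (by linarith)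
        obtain ⟨hx1, hx2⟩ := hb₀
        obtain ⟨hy1, hy2⟩ := hIBy
        have hsupp : ∀ p : Multiplicative ℤ,
            ((x⁻¹ * y).left : Multiplicative ℤ → Multiplicative (ZMod n)) p ≠ 1 →
            (Multiplicative.toAdd p).natAbs < A := by
          intro p hp
          have hyq : (y.left : Multiplicative ℤ → Multiplicative (ZMod n)) (x.right * p)
              = (x.left : Multiplicative ℤ → Multiplicative (ZMod n)) (x.right * p) *
                ((x⁻¹ * y).left : Multiplicative ℤ → Multiplicative (ZMod n))
                  (x.right⁻¹ * (x.right * p)) := by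
            conv_lhs => rw [show y = x * (x⁻¹ * y) by group]
            exact mul_left_apply x (x⁻¹ * y) (x.right * p)
          rw [inv_mul_cancel_left] at hyq
          have hne : (x.left : Multiplicative ℤ → Multiplicative (ZMod n)) (x.right * p)
              ≠ (y.left : Multiplicative ℤ → Multiplicative (ZMod n)) (x.right * p) := by
            intro hcon
            rw [hyq] at hcon
            exact hp (left_eq_mul.mp hcon)
          by_contra hcon2
          push_neg at hcon2
          have h7r : (7 : ℝ) * r ≤ |((Multiplicative.toAdd p : ℤ) : ℝ)| := by
            calc (7 : ℝ) * r ≤ (A : ℝ) := hA1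
              _ ≤ (((Multiplicative.toAdd p).natAbs : ℕ) : ℝ) := by exact_mod_cast hcon2
              _ = |((Multiplicative.toAdd p : ℤ) : ℝ)| := by
                  rw [Nat.cast_natAbs]
                  push_cast
                  ring
          have hq : ((Multiplicative.toAdd (x.right * p) : ℤ) : ℝ)
              = ((kk x : ℤ) : ℝ) + ((Multiplicative.toAdd p : ℤ) : ℝ) := by
            rw [toAdd_mul]
            push_cast
            rfl
          refine hne (hlamps (x.right * p) ?_)
          rcases le_abs.mp h7r with h | h
          · right
            rw [hq]
            linarith
          · left
            rw [hq]
            linarith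
        have hkabs : (kk (x⁻¹ * y)).natAbs ≤ A := by
          have h1 : |((kk y : ℤ) : ℝ) - ((kk x : ℤ) : ℝ)| < 6 * r :=
            abs_lt.mpr ⟨by linarith, by linarith⟩
          have h2 : (((kk (x⁻¹ * y)).natAbs : ℕ) : ℝ) ≤ (A : ℝ) := by
            rw [kk_inv_mul, Nat.cast_natAbs]
            push_cast
            linarith
          exact_mod_cast h2
        have hwl := wordLength_le (x⁻¹ * y) A hsupp
        show ENNReal.ofReal (wreathDist (Multiplicative (ZMod n)) (Multiplicative ℤ)
          {Multiplicative.ofAdd (1 : ℤ)} x y) ≤ ENNReal.ofReal (60 * r)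
        apply ENNReal.ofReal_le_ofReal
        rw [hd]
        have hc1 : (wordLength (SS (Multiplicative (ZMod n))) (x⁻¹ * y) : ℝ)
            ≤ ((6 * A + (kk (x⁻¹ * y)).natAbs : ℕ) : ℝ) := by exact_mod_cast hwl
        have hc2 : (((kk (x⁻¹ * y)).natAbs : ℕ) : ℝ) ≤ (A : ℝ) := by exact_mod_cast hkabs
        have hc3 : ((6 * A + (kk (x⁻¹ * y)).natAbs : ℕ) : ℝ)
            = 6 * (A : ℝ) + (((kk (x⁻¹ * y)).natAbs : ℕ) : ℝ) := by push_cast; ring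
        linarith
  · -- lower bound : dimension ≠ 0
    rintro ⟨C, hC, hcf⟩
    obtain ⟨P, hcover, -, hcomp⟩ := hcf 2 (by norm_num)
    have hP0 : ∀ z : Wreath (Multiplicative (ZMod n)) (Multiplicative ℤ), z ∈ P 0 := by
      intro z
      have hz : z ∈ ⋃ i, P i := by rw [hcover]; exact Set.mem_univ z
      obtain ⟨i, hi⟩ := Set.mem_iUnion.mp hz
      have h0 : i = 0 := by
        have := i.isLt
        exact Fin.ext (by omega)
      rwa [h0] at hi
    set K : ℕ := ⌈2 * C⌉₊ + 1 with hK
    set y : Wreath (Multiplicative (ZMod n)) (Multiplicative ℤ) :=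
      inr (Multiplicative.ofAdd (K : ℤ)) with hy
    obtain ⟨w, hlet, hprod, -⟩ := exists_min_word y
    have hchain : ChainIn (wreathDist (Multiplicative (ZMod n)) (Multiplicative ℤ)
        {Multiplicative.ofAdd (1 : ℤ)}) (P 0) 2 1 y := by
      refine ⟨w.length, fun j => (w.take (j : ℕ)).prod, fun j => hP0 _, ?_, ?_, ?_⟩
      · show (w.take ((0 : Fin (w.length + 1)) : ℕ)).prod = 1
        simp
      · show (w.take ((Fin.last w.length : Fin (w.length + 1)) : ℕ)).prod = y
        rw [Fin.val_last, List.take_length, hprod]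
      · intro j
        show wreathDist (Multiplicative (ZMod n)) (Multiplicative ℤ)
            {Multiplicative.ofAdd (1 : ℤ)} (w.take ((j.castSucc : Fin (w.length + 1)) : ℕ)).prod
            (w.take ((j.succ : Fin (w.length + 1)) : ℕ)).prod < 2
        rw [Fin.coe_castSucc, Fin.val_succ]
        have hps := List.prod_take_succ w (j : ℕ) j.isLt
        rw [hd, hps, inv_mul_cancel_left]
        have h1 : wordLength (SS (Multiplicative (ZMod n))) (w[(j : ℕ)]) ≤ 1 := by
          apply Nat.sInf_le
          refine ⟨[w[(j : ℕ)]], rfl, ?_, List.prod_singleton⟩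
          intro z hz
          rcases List.mem_singleton.mp hz with rfl
          exact hlet _ (List.getElem_mem _)
        have h2 : (wordLength (SS (Multiplicative (ZMod n))) (w[(j : ℕ)]) : ℝ) ≤ 1 := by
          exact_mod_cast h1
        linarith
    have hb := hcomp 0 1 (hP0 1) y (hP0 y) hchain
    have hb2 : wreathDist (Multiplicative (ZMod n)) (Multiplicative ℤ)
        {Multiplicative.ofAdd (1 : ℤ)} 1 y ≤ C * 2 :=
      (ENNReal.ofReal_le_ofReal_iff (by linarith)).mp hb
    have hky : kk ((1 : Wreath (Multiplicative (ZMod n)) (Multiplicative ℤ))⁻¹ * y) = (K : ℤ) := by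
      rw [kk_inv_mul]
      have h1 : kk y = (K : ℤ) := by rw [hy]; simp [kk]
      have h2 : kk (1 : Wreath (Multiplicative (ZMod n)) (Multiplicative ℤ)) = 0 := by
        simp [kk]
      rw [h1, h2]
      ring
    have hlow : (K : ℝ) ≤ wreathDist (Multiplicative (ZMod n)) (Multiplicative ℤ)
        {Multiplicative.ofAdd (1 : ℤ)} 1 y := by
      rw [hd]
      have h1 := k_le_wordLength ((1 : Wreath (Multiplicative (ZMod n)) (Multiplicative ℤ))⁻¹ * y)
      rw [hky] at h1
      have h2 : ((K : ℤ)).natAbs = K := Int.natAbs_natCast K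
      rw [h2] at h1
      exact_mod_cast h1
    have hK2 : 2 * C < (K : ℝ) := by
      have h1 := Nat.le_ceil (2 * C)
      have h2 : (K : ℝ) = (⌈2 * C⌉₊ : ℝ) + 1 := by rw [hK]; push_cast; ring
      linarith
    linarith

end
end

section
/- Let G be an infinite finitely generated group whose growth function is bounded by a linear function. Then G is virtually infinite cyclic, i.e., G contains a subgroup isomorphic to ℤ of finite index. -/
open Function SemidirectProduct ENNReal

noncomputable section

variable (H G : Type*) [Group H] [Group G]

namespace S17

variable {Γ : Type*} [Group Γ]

/-- `w` is a word over the symmetrized alphabet of `S`. -/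
def IsWord (S : Set Γ) (w : List Γ) : Prop := ∀ x ∈ w, x ∈ S ∨ x⁻¹ ∈ S

theorem wordLength_le {S : Set Γ} {w : List Γ} {g : Γ} (hw : IsWord S w) (hp : w.prod = g) :
    wordLength S g ≤ w.length :=
  Nat.sInf_le ⟨w, rfl, hw, hp⟩

theorem IsWord.append {S : Set Γ} {v w : List Γ} (hv : IsWord S v) (hw : IsWord S w) :
    IsWord S (v ++ w) := by
  intro x hx
  rcases List.mem_append.1 hx with h | h
  · exact hv x h
  · exact hw x h

theorem IsWord.sub {S : Set Γ} {v w : List Γ} (hw : IsWord S w) (hsub : v ⊆ w) :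
    IsWord S v := fun x hx => hw x (hsub hx)

theorem exists_word {S : Set Γ} (hgen : Subgroup.closure S = ⊤) (g : Γ) :
    ∃ w : List Γ, IsWord S w ∧ w.prod = g := by
  have hg : g ∈ Subgroup.closure S := by rw [hgen]; exact Subgroup.mem_top g
  induction hg using Subgroup.closure_induction with
  | mem x hx => exact ⟨[x], by intro y hy; simp at hy; subst hy; exact Or.inl hx, by simp⟩
  | one => exact ⟨[], by intro y hy; simp at hy, by simp⟩
  | mul x y _ _ ihx ihy =>
      obtain ⟨v, hv, hvp⟩ := ihx
      obtain ⟨w, hw, hwp⟩ := ihy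
      exact ⟨v ++ w, hv.append hw, by simp [hvp, hwp]⟩
  | inv x _ ihx =>
      obtain ⟨v, hv, hvp⟩ := ihx
      refine ⟨(v.map fun y => y⁻¹).reverse, ?_, by rw [← List.prod_inv_reverse, hvp]⟩
      intro y hy
      simp only [List.mem_reverse, List.mem_map] at hy
      obtain ⟨z, hz, rfl⟩ := hy
      rcases hv z hz with h | h
      · exact Or.inr (by simpa using h)
      · exact Or.inl h

theorem exists_geodesic {S : Set Γ} (hgen : Subgroup.closure S = ⊤) (g : Γ) :
    ∃ w : List Γ, IsWord S w ∧ w.prod = g ∧ w.length = wordLength S g := by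
  obtain ⟨w, hw, hwp⟩ := exists_word hgen g
  have hne : {m | ∃ w : List Γ, w.length = m ∧ (∀ x ∈ w, x ∈ S ∨ x⁻¹ ∈ S) ∧ w.prod = g}.Nonempty :=
    ⟨w.length, w, rfl, hw, hwp⟩
  obtain ⟨v, hvl, hvw, hvp⟩ := Nat.sInf_mem hne
  exact ⟨v, hvw, hvp, hvl⟩

theorem wordLength_one {S : Set Γ} : wordLength S (1 : Γ) = 0 := by
  have h : wordLength S (1 : Γ) ≤ ([] : List Γ).length :=
    wordLength_le (fun x hx => by simp at hx) (by simp)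
  simpa using h

theorem wordLength_mul_le {S : Set Γ} (hgen : Subgroup.closure S = ⊤) (g h : Γ) :
    wordLength S (g * h) ≤ wordLength S g + wordLength S h := by
  obtain ⟨v, hv, hvp, hvl⟩ := exists_geodesic hgen g
  obtain ⟨w, hw, hwp, hwl⟩ := exists_geodesic hgen h
  calc wordLength S (g * h) ≤ (v ++ w).length := wordLength_le (hv.append hw) (by simp [hvp, hwp])
  _ = _ := by simp [hvl, hwl]

theorem eq_one_of_wordLength_eq_zero {S : Set Γ} (hgen : Subgroup.closure S = ⊤) {g : Γ}
    (h : wordLength S g = 0) : g = 1 := by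
  obtain ⟨w, _, hwp, hwl⟩ := exists_geodesic hgen g
  rw [h, List.length_eq_zero_iff] at hwl
  simp [hwl] at hwp
  exact hwp.symm


theorem finite_words {S : Set Γ} (hS : S.Finite) (n : ℕ) :
    {w : List Γ | IsWord S w ∧ w.length = n}.Finite := by
  induction n with
  | zero =>
      refine Set.Finite.subset (Set.finite_singleton ([] : List Γ)) ?_
      intro w hw
      simp only [Set.mem_singleton_iff]
      exact List.length_eq_zero_iff.1 hw.2
  | succ n ih =>
      have h1 : ((S ∪ S⁻¹) ×ˢ {w : List Γ | IsWord S w ∧ w.length = n}).Finite :=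
        (hS.union hS.inv).prod ih
      refine Set.Finite.subset (h1.image fun p => p.1 :: p.2) ?_
      rintro w ⟨hw, hl⟩
      cases w with
      | nil => simp at hl
      | cons a t =>
          refine ⟨(a, t), ⟨?_, ?_, ?_⟩, rfl⟩
          · rcases hw a List.mem_cons_self with h | h
            · exact Or.inl h
            · exact Or.inr (Set.mem_inv.2 h)
          · exact fun x hx => hw x (List.mem_cons_of_mem _ hx)
          · simpa using hl

theorem finite_ball {S : Set Γ} (hS : S.Finite) (hgen : Subgroup.closure S = ⊤) (n : ℕ) :
    {g : Γ | wordLength S g ≤ n}.Finite := by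
  have h1 : (⋃ k ∈ Finset.range (n+1), {w : List Γ | IsWord S w ∧ w.length = k}).Finite :=
    Set.Finite.biUnion (Finset.range (n+1)).finite_toSet (fun k _ => finite_words hS k)
  refine Set.Finite.subset (h1.image List.prod) ?_
  intro g hg
  obtain ⟨w, hw, hwp, hwl⟩ := exists_geodesic hgen g
  refine ⟨w, ?_, hwp⟩
  simp only [Set.mem_iUnion]
  exact ⟨w.length, by simp only [Finset.mem_range, Nat.lt_succ_iff]; rw [hwl]; exact hg, hw, rfl⟩

theorem geodesic_take_drop {S : Set Γ} (hgen : Subgroup.closure S = ⊤) {w : List Γ}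
    (hw : IsWord S w) (hlen : w.length = wordLength S w.prod) (k : ℕ) :
    wordLength S (w.take k).prod = (w.take k).length ∧
      wordLength S (w.drop k).prod = (w.drop k).length := by
  have h1 : wordLength S (w.take k).prod ≤ (w.take k).length :=
    wordLength_le (hw.sub (List.take_subset _ _)) rfl
  have h2 : wordLength S (w.drop k).prod ≤ (w.drop k).length :=
    wordLength_le (hw.sub (List.drop_subset _ _)) rfl
  have hsplit : w.prod = (w.take k).prod * (w.drop k).prod := by
    conv_lhs => rw [← List.take_append_drop k w]
    rw [List.prod_append]
  have h3 : wordLength S w.prod ≤ wordLength S (w.take k).prod + wordLength S (w.drop k).prod := by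
    rw [hsplit]; exact wordLength_mul_le hgen _ _
  have h4 : (w.take k).length + (w.drop k).length = w.length := by
    rw [List.length_take, List.length_drop]; omega
  omega

theorem exists_wordLength_eq {S : Set Γ} [Infinite Γ] (hS : S.Finite)
    (hgen : Subgroup.closure S = ⊤) (n : ℕ) : ∃ g : Γ, wordLength S g = n := by
  obtain ⟨g, hg⟩ : ∃ g : Γ, ¬ wordLength S g ≤ n := by
    by_contra h
    push_neg at h
    exact Set.infinite_univ ((finite_ball hS hgen n).subset (fun g _ => h g))
  push_neg at hg
  obtain ⟨w, hw, hwp, hwl⟩ := exists_geodesic hgen g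
  refine ⟨(w.take n).prod, ?_⟩
  have h1 := (geodesic_take_drop hgen hw (by rw [hwp]; exact hwl) n).1
  rw [h1, List.length_take, hwl]
  omega


/-! ### Shortlex normal forms -/

section NF

variable [LinearOrder Γ]

omit [Group Γ] in
theorem lex_append_of_lex {p q : List Γ} (h : List.Lex (· < ·) p q) (hl : p.length = q.length)
    (s t : List Γ) : List.Lex (· < ·) (p ++ s) (q ++ t) := by
  induction h with
  | nil => simp at hl
  | rel hab => simp only [List.cons_append]; exact List.Lex.rel hab
  | cons h ih =>
      simp only [List.cons_append]
      exact List.Lex.cons (ih (by simpa using hl))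

omit [Group Γ] in
theorem lt_append {p q : List Γ} (h : p < q) (hl : p.length = q.length) (s t : List Γ) :
    p ++ s < q ++ t :=
  show List.Lex (· < ·) (p ++ s) (q ++ t) from lex_append_of_lex h hl s t

omit [Group Γ] in
theorem append_lt_append_left {s t : List Γ} (h : s < t) (c : List Γ) : c ++ s < c ++ t :=
  show List.Lex (· < ·) (c ++ s) (c ++ t) from List.Lex.append_left _ h c

variable (S : Set Γ)

/-- The set of geodesic words representing `g`. -/
def geodesics (g : Γ) : Set (List Γ) :=
  {w | IsWord S w ∧ w.prod = g ∧ w.length = wordLength S g}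

variable {S}

theorem geodesics_finite (hS : S.Finite) (g : Γ) : (geodesics S g).Finite :=
  (finite_words hS (wordLength S g)).subset (fun _ hw => ⟨hw.1, hw.2.2⟩)

theorem geodesics_nonempty (hgen : Subgroup.closure S = ⊤) (g : Γ) :
    (geodesics S g).Nonempty := by
  obtain ⟨w, h1, h2, h3⟩ := exists_geodesic hgen g
  exact ⟨w, h1, h2, h3⟩

/-- Shortlex normal form. -/
noncomputable def nf (hS : S.Finite) (hgen : Subgroup.closure S = ⊤) (g : Γ) : List Γ :=
  Classical.choose (Set.exists_min_image (geodesics S g) id (geodesics_finite hS g)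
    (geodesics_nonempty hgen g))

variable (hS : S.Finite) (hgen : Subgroup.closure S = ⊤)

theorem nf_mem (g : Γ) : nf hS hgen g ∈ geodesics S g :=
  (Classical.choose_spec (Set.exists_min_image (geodesics S g) id (geodesics_finite hS g)
    (geodesics_nonempty hgen g))).1

theorem nf_min {g : Γ} {v : List Γ} (hv : v ∈ geodesics S g) : nf hS hgen g ≤ v :=
  (Classical.choose_spec (Set.exists_min_image (geodesics S g) id (geodesics_finite hS g)
    (geodesics_nonempty hgen g))).2 v hv

theorem nf_isWord (g : Γ) : IsWord S (nf hS hgen g) := (nf_mem hS hgen g).1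

theorem nf_prod (g : Γ) : (nf hS hgen g).prod = g := (nf_mem hS hgen g).2.1

theorem nf_length (g : Γ) : (nf hS hgen g).length = wordLength S g := (nf_mem hS hgen g).2.2

/-- `w` belongs to the shortlex normal-form language. -/
def InL (w : List Γ) : Prop := nf hS hgen w.prod = w

theorem InL_nf (g : Γ) : InL hS hgen (nf hS hgen g) := by
  unfold InL
  rw [nf_prod]

theorem InL_nil : InL hS hgen ([] : List Γ) := by
  unfold InL
  rw [List.prod_nil]
  have h := nf_length hS hgen (1 : Γ)
  rw [wordLength_one] at h
  exact List.length_eq_zero_iff.1 h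

variable {hS hgen}

theorem InL.isWord {w : List Γ} (h : InL hS hgen w) : IsWord S w := by
  rw [← h]; exact nf_isWord hS hgen _

theorem InL.lengthEq {w : List Γ} (h : InL hS hgen w) : w.length = wordLength S w.prod := by
  conv_lhs => rw [← h]
  rw [nf_length]

theorem InL.take {w : List Γ} (h : InL hS hgen w) (k : ℕ) : InL hS hgen (w.take k) := by
  rcases le_or_gt k w.length with hk | hk
  swap
  · rw [List.take_of_length_le (le_of_lt hk)]; exact h
  have hw : IsWord S w := h.isWord
  have hlen : w.length = wordLength S w.prod := h.lengthEq
  have hp : wordLength S (w.take k).prod = (w.take k).length :=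
    (geodesic_take_drop hgen hw hlen k).1
  by_cases hpp : nf hS hgen (w.take k).prod = w.take k
  · exact hpp
  exfalso
  set p' := nf hS hgen (w.take k).prod with hp'def
  have hpm := nf_mem hS hgen (w.take k).prod
  have hle : p' ≤ w.take k :=
    nf_min hS hgen ⟨hw.sub (List.take_subset _ _), rfl, hp.symm⟩
  have hlt : p' < w.take k := lt_of_le_of_ne hle hpp
  have hlen' : p'.length = (w.take k).length := by rw [hpm.2.2, hp]
  have h2 : p' ++ w.drop k < w.take k ++ w.drop k :=
    lt_append hlt hlen' _ _
  rw [List.take_append_drop] at h2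
  have hmem : p' ++ w.drop k ∈ geodesics S w.prod := by
    refine ⟨hpm.1.append (hw.sub (List.drop_subset _ _)), ?_, ?_⟩
    · rw [List.prod_append, hpm.2.1]
      conv_rhs => rw [← List.take_append_drop k w, List.prod_append]
    · rw [List.length_append, hlen', ← hlen]
      conv_rhs => rw [← List.take_append_drop k w, List.length_append]
  have h3 := nf_min hS hgen hmem
  rw [h] at h3
  exact absurd h2 (not_lt.2 h3)

theorem InL.drop {w : List Γ} (h : InL hS hgen w) (k : ℕ) : InL hS hgen (w.drop k) := by
  rcases le_or_gt k w.length with hk | hk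
  swap
  · rw [List.drop_of_length_le (le_of_lt hk)]; exact InL_nil hS hgen
  have hw : IsWord S w := h.isWord
  have hlen : w.length = wordLength S w.prod := h.lengthEq
  have hq : wordLength S (w.drop k).prod = (w.drop k).length :=
    (geodesic_take_drop hgen hw hlen k).2
  by_cases hqq : nf hS hgen (w.drop k).prod = w.drop k
  · exact hqq
  exfalso
  set q' := nf hS hgen (w.drop k).prod with hq'def
  have hqm := nf_mem hS hgen (w.drop k).prod
  have hle : q' ≤ w.drop k :=
    nf_min hS hgen ⟨hw.sub (List.drop_subset _ _), rfl, hq.symm⟩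
  have hlt : q' < w.drop k := lt_of_le_of_ne hle hqq
  have h2 : w.take k ++ q' < w.take k ++ w.drop k := append_lt_append_left hlt _
  rw [List.take_append_drop] at h2
  have hmem : w.take k ++ q' ∈ geodesics S w.prod := by
    refine ⟨(hw.sub (List.take_subset _ _)).append hqm.1, ?_, ?_⟩
    · rw [List.prod_append, hqm.2.1]
      conv_rhs => rw [← List.take_append_drop k w, List.prod_append]
    · rw [List.length_append, hqm.2.2, hq, ← hlen]
      conv_rhs => rw [← List.take_append_drop k w, List.length_append]
  have h3 := nf_min hS hgen hmem
  rw [h] at h3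
  exact absurd h2 (not_lt.2 h3)


omit [Group Γ] [LinearOrder Γ] in
theorem exists_mem_forall_of_antitone {α : Type*} (D : ℕ → Set α) (n₀ : ℕ)
    (hfin : (D n₀).Finite) (hne : ∀ m, n₀ ≤ m → (D m).Nonempty)
    (hanti : ∀ m m', n₀ ≤ m → m ≤ m' → D m' ⊆ D m) :
    ∃ v, ∀ m, n₀ ≤ m → v ∈ D m := by
  have hfin' : ∀ m, n₀ ≤ m → (D m).Finite := fun m hm => hfin.subset (hanti n₀ m le_rfl hm)
  have hTne : (Set.range fun k => (D (n₀ + k)).ncard).Nonempty := ⟨_, 0, rfl⟩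
  obtain ⟨k, hk⟩ := Nat.sInf_mem hTne
  have key : ∀ m, n₀ + k ≤ m → D m = D (n₀ + k) := by
    intro m hm
    have hsub : D m ⊆ D (n₀ + k) := hanti _ _ (by omega) hm
    refine Set.eq_of_subset_of_ncard_le hsub ?_ (hfin' _ (by omega))
    have hk' : (D (n₀ + k)).ncard = sInf (Set.range fun k => (D (n₀ + k)).ncard) := hk
    rw [hk']
    exact Nat.sInf_le ⟨m - n₀, by
      have h : n₀ + (m - n₀) = m := by omega
      exact congrArg (fun j => (D j).ncard) h⟩
  obtain ⟨v, hv⟩ := hne (n₀ + k) (by omega)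
  refine ⟨v, fun m hm => ?_⟩
  rcases le_or_gt m (n₀ + k) with h | h
  · exact hanti m (n₀ + k) hm h hv
  · rw [key m (le_of_lt h)]; exact hv

variable (hS hgen) in
/-- Normal forms of length `n` which extend to normal forms of every greater length. -/
def Ext (n : ℕ) : Set (List Γ) :=
  {w | InL hS hgen w ∧ w.length = n ∧
    ∀ m, n ≤ m → ∃ v, InL hS hgen v ∧ v.length = m ∧ w <+: v}

theorem nil_mem_Ext [Infinite Γ] : ([] : List Γ) ∈ Ext hS hgen 0 := by
  refine ⟨InL_nil hS hgen, rfl, fun m _ => ?_⟩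
  obtain ⟨g, hg⟩ := exists_wordLength_eq hS hgen m
  exact ⟨nf hS hgen g, InL_nf hS hgen g, by rw [nf_length, hg], List.nil_prefix⟩

theorem Ext_step {w : List Γ} {n : ℕ} (h : w ∈ Ext hS hgen n) :
    ∃ a, w ++ [a] ∈ Ext hS hgen (n + 1) := by
  set D : ℕ → Set (List Γ) := fun m =>
    {v | InL hS hgen v ∧ v.length = n + 1 ∧ w <+: v ∧
      ∃ z, InL hS hgen z ∧ z.length = m ∧ v <+: z} with hD
  have hwlen : w.length = n := h.2.1
  have hfin : (D (n + 1)).Finite :=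
    (finite_words hS (n + 1)).subset (fun v hv => ⟨hv.1.isWord, hv.2.1⟩)
  have hne : ∀ m, n + 1 ≤ m → (D m).Nonempty := by
    intro m hm
    obtain ⟨z, hz, hzl, hwz⟩ := h.2.2 m (by omega)
    refine ⟨z.take (n + 1), hz.take _, ?_, ?_, z, hz, hzl, List.take_prefix _ _⟩
    · rw [List.length_take, hzl]; omega
    · have hw' : w = z.take n := by
        have := List.prefix_iff_eq_take.1 hwz
        rwa [hwlen] at this
      rw [hw']
      rw [List.take_isPrefix_take]
      omega
  have hanti : ∀ m m', n + 1 ≤ m → m ≤ m' → D m' ⊆ D m := by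
    intro m m' hm hmm' v hv
    obtain ⟨h1, h2, h3, z', hz', hzl', hvz'⟩ := hv
    refine ⟨h1, h2, h3, z'.take m, hz'.take _, ?_, ?_⟩
    · rw [List.length_take, hzl']; omega
    · have hv' : v = z'.take (n + 1) := by
        have := List.prefix_iff_eq_take.1 hvz'
        rwa [h2] at this
      rw [hv']
      rw [List.take_isPrefix_take]
      omega
  obtain ⟨v, hv⟩ := exists_mem_forall_of_antitone D (n + 1) hfin hne hanti
  have h1 := hv (n + 1) le_rfl
  obtain ⟨t, ht⟩ := h1.2.2.1
  have htlen : t.length = 1 := by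
    have h2 := congrArg List.length ht
    have h3 := h1.2.1
    simp only [List.length_append] at h2
    omega
  obtain ⟨a, rfl⟩ := List.length_eq_one_iff.1 htlen
  refine ⟨a, ?_, ?_, ?_⟩
  · rw [ht]; exact h1.1
  · rw [ht]; exact h1.2.1
  · intro m hm
    obtain ⟨_, _, _, z, hz, hzl, hvz⟩ := hv m hm
    exact ⟨z, hz, hzl, by rw [ht]; exact hvz⟩

variable (hS hgen) in
/-- A geodesic ray through normal forms. -/
noncomputable def rayW [Infinite Γ] : (n : ℕ) → {w : List Γ // w ∈ Ext hS hgen n}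
  | 0 => ⟨[], nil_mem_Ext⟩
  | n+1 => ⟨(rayW n).1 ++ [Classical.choose (Ext_step (rayW n).2)],
      Classical.choose_spec (Ext_step (rayW n).2)⟩

variable [Infinite Γ]

theorem rayW_prefix_succ (n : ℕ) : (rayW hS hgen n).1 <+: (rayW hS hgen (n + 1)).1 :=
  List.prefix_append _ _

theorem rayW_prefix {m n : ℕ} (h : m ≤ n) : (rayW hS hgen m).1 <+: (rayW hS hgen n).1 := by
  induction n with
  | zero =>
      have h0 : m = 0 := by omega
      subst h0; exact List.prefix_refl _
  | succ n ih =>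
      rcases eq_or_lt_of_le h with rfl | h'
      · exact List.prefix_refl _
      · exact (ih (by omega)).trans (rayW_prefix_succ n)
variable (hS hgen) in
/-- The `n`-th prefix word of the ray. -/
def W (n : ℕ) : List Γ := (rayW hS hgen n).1

theorem W_InL (n : ℕ) : InL hS hgen (W hS hgen n) := (rayW hS hgen n).2.1

theorem W_len (n : ℕ) : (W hS hgen n).length = n := (rayW hS hgen n).2.2.1

theorem W_take {m n : ℕ} (h : m ≤ n) : (W hS hgen n).take m = W hS hgen m := by
  have hp : W hS hgen m <+: W hS hgen n := rayW_prefix h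
  have := List.prefix_iff_eq_take.1 hp
  rw [W_len] at this
  exact this.symm

variable (hS hgen) in
/-- The segment of the ray from position `m` to `m + j`. -/
def sg (m j : ℕ) : List Γ := (W hS hgen (m + j)).drop m

variable (hS hgen) in
/-- The ray displacement element from position `m` to `m + j`. -/
def rayU (m j : ℕ) : Γ := (sg hS hgen m j).prod

theorem W_append_sg (m j : ℕ) : W hS hgen m ++ sg hS hgen m j = W hS hgen (m + j) := by
  have h1 : (W hS hgen (m + j)).take m = W hS hgen m := W_take (by omega)
  conv_rhs => rw [← List.take_append_drop m (W hS hgen (m + j))]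
  rw [h1]
  rfl

theorem sg_InL (m j : ℕ) : InL hS hgen (sg hS hgen m j) := (W_InL (m + j)).drop m

theorem sg_len (m j : ℕ) : (sg hS hgen m j).length = j := by
  show ((W hS hgen (m + j)).drop m).length = j
  rw [List.length_drop, W_len]
  omega

theorem sg_nf (m j : ℕ) : sg hS hgen m j = nf hS hgen (rayU hS hgen m j) :=
  (sg_InL m j).symm

theorem wordLength_rayU (m j : ℕ) : wordLength S (rayU hS hgen m j) = j := by
  have h := (sg_InL (hS := hS) (hgen := hgen) m j).lengthEq
  rw [sg_len] at h
  exact h.symm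

theorem sg_add (m j k : ℕ) :
    sg hS hgen m (j + k) = sg hS hgen m j ++ sg hS hgen (m + j) k := by
  apply List.append_cancel_left (as := W hS hgen m)
  rw [W_append_sg, ← List.append_assoc, W_append_sg, ← Nat.add_assoc, W_append_sg]

theorem rayU_add (m j k : ℕ) :
    rayU hS hgen m (j + k) = rayU hS hgen m j * rayU hS hgen (m + j) k := by
  show (sg hS hgen m (j + k)).prod = _
  rw [sg_add, List.prod_append]
  rfl

theorem rayU_down {m m' i j : ℕ} (hji : j ≤ i)
    (h : rayU hS hgen m i = rayU hS hgen m' i) : rayU hS hgen m j = rayU hS hgen m' j := by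
  have hseg : sg hS hgen m i = sg hS hgen m' i := by
    rw [sg_nf, h, ← sg_nf]
  obtain ⟨k, rfl⟩ := Nat.exists_eq_add_of_le hji
  have h1 : (sg hS hgen m (j + k)).take j = sg hS hgen m j := by
    rw [sg_add]; exact List.take_left' (sg_len m j)
  have h2 : (sg hS hgen m' (j + k)).take j = sg hS hgen m' j := by
    rw [sg_add]; exact List.take_left' (sg_len m' j)
  show (sg hS hgen m j).prod = (sg hS hgen m' j).prod
  rw [← h1, ← h2, hseg]

variable (hS hgen) in
/-- The set of scale-`i` displacements along the ray. -/
def raySet (i : ℕ) : Set Γ := Set.range fun m => rayU hS hgen m i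

theorem raySet_finite (i : ℕ) : (raySet hS hgen i).Finite :=
  (finite_ball hS hgen i).subset (by rintro _ ⟨m, rfl⟩; exact le_of_eq (wordLength_rayU m i))

theorem raySet_ncard_mono {j i : ℕ} (hji : j ≤ i) :
    (raySet hS hgen j).ncard ≤ (raySet hS hgen i).ncard := by
  classical
  set F : Γ → Γ := fun v =>
    if h : ∃ m, rayU hS hgen m i = v then rayU hS hgen (Classical.choose h) j else 1 with hF
  have hFval : ∀ m, F (rayU hS hgen m i) = rayU hS hgen m j := by
    intro m
    have hex : ∃ m', rayU hS hgen m' i = rayU hS hgen m i := ⟨m, rfl⟩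
    simp only [hF, dif_pos hex]
    exact rayU_down hji (Classical.choose_spec hex)
  have himg : raySet hS hgen j = F '' raySet hS hgen i := by
    ext v
    constructor
    · rintro ⟨m, rfl⟩
      exact ⟨rayU hS hgen m i, ⟨m, rfl⟩, hFval m⟩
    · rintro ⟨_, ⟨m, rfl⟩, rfl⟩
      exact ⟨m, (hFval m).symm⟩
  rw [himg]
  exact Set.ncard_image_le (raySet_finite i)

include hS hgen in
/-- The key construction: an element `V` with `wordLength (V^r) = r*P` for all `r`. -/
theorem exists_undistorted {C : ℕ}
    (hC : ∀ N, ∃ i, N ≤ i ∧ {g : Γ | wordLength S g = i}.ncard ≤ C) :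
    ∃ (V : Γ) (P : ℕ), 0 < P ∧ ∀ r : ℕ, wordLength S (V ^ r) = r * P := by
  classical
  -- bound on all scales
  have hcle : ∀ i, (raySet hS hgen i).ncard ≤ C := by
    intro i
    obtain ⟨i', hii', hi'⟩ := hC i
    refine le_trans (raySet_ncard_mono (hS := hS) (hgen := hgen) hii') (le_trans ?_ hi')
    refine Set.ncard_le_ncard ?_ ?_
    · rintro _ ⟨m, rfl⟩
      exact wordLength_rayU m i'
    · exact ((finite_ball hS hgen i').subset (fun g hg => le_of_eq hg))
  -- stabilization
  obtain ⟨i₀, hi₀⟩ : ∃ i₀, ∀ j, i₀ ≤ j →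
      (raySet hS hgen j).ncard = (raySet hS hgen i₀).ncard := by
    have hbdd : BddAbove (Set.range fun i => (raySet hS hgen i).ncard) := by
      refine ⟨C, ?_⟩
      rintro _ ⟨i, rfl⟩
      exact hcle i
    obtain ⟨i₀, hi₀⟩ := Nat.sSup_mem (Set.range_nonempty _) hbdd
    refine ⟨i₀, fun j hj => le_antisymm ?_ ?_⟩
    · have h1 : (raySet hS hgen j).ncard ≤ sSup (Set.range fun i => (raySet hS hgen i).ncard) :=
        le_csSup hbdd ⟨j, rfl⟩
      rw [← hi₀] at h1
      exact h1
    · exact raySet_ncard_mono hj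
  -- upward determination
  have hup : ∀ j, i₀ ≤ j → ∀ m m', rayU hS hgen m j = rayU hS hgen m' j →
      rayU hS hgen m (j + 1) = rayU hS hgen m' (j + 1) := by
    intro j hj m m' hmm
    set F : Γ → Γ := fun v =>
      if h : ∃ m, rayU hS hgen m (j + 1) = v then rayU hS hgen (Classical.choose h) j else 1
      with hF
    have hFval : ∀ m₁, F (rayU hS hgen m₁ (j + 1)) = rayU hS hgen m₁ j := by
      intro m₁
      have hex : ∃ m', rayU hS hgen m' (j + 1) = rayU hS hgen m₁ (j + 1) := ⟨m₁, rfl⟩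
      simp only [hF, dif_pos hex]
      exact rayU_down (by omega) (Classical.choose_spec hex)
    set A := (raySet_finite (hS := hS) (hgen := hgen) (j + 1)).toFinset with hA
    have himg : A.image F = (raySet_finite (hS := hS) (hgen := hgen) j).toFinset := by
      ext v
      simp only [Finset.mem_image, Set.Finite.mem_toFinset, hA]
      constructor
      · rintro ⟨_, ⟨m₁, rfl⟩, rfl⟩
        rw [hFval m₁]
        exact ⟨m₁, rfl⟩
      · rintro ⟨m₁, rfl⟩
        exact ⟨rayU hS hgen m₁ (j + 1), ⟨m₁, rfl⟩, hFval m₁⟩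
    have hcard : (A.image F).card = A.card := by
      rw [himg]
      rw [← Set.ncard_eq_toFinset_card _ (raySet_finite j),
        ← Set.ncard_eq_toFinset_card _ (raySet_finite (j + 1))]
      rw [hi₀ j hj, hi₀ (j + 1) (by omega)]
    have hinj := Finset.card_image_iff.1 hcard
    have h1 : rayU hS hgen m (j + 1) ∈ (A : Set Γ) := by
      simp only [hA, Set.Finite.coe_toFinset]
      exact ⟨m, rfl⟩
    have h2 : rayU hS hgen m' (j + 1) ∈ (A : Set Γ) := by
      simp only [hA, Set.Finite.coe_toFinset]
      exact ⟨m', rfl⟩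
    refine hinj h1 h2 ?_
    rw [hFval m, hFval m', hmm]
  -- chain upward from i₀
  have hchain : ∀ m m', rayU hS hgen m i₀ = rayU hS hgen m' i₀ →
      ∀ j, i₀ ≤ j → rayU hS hgen m j = rayU hS hgen m' j := by
    intro m m' h j hj
    induction j, hj using Nat.le_induction with
    | base => exact h
    | succ j hj ih => exact hup j hj m m' ih
  -- pigeonhole
  haveI : Finite ↥(raySet hS hgen i₀) := (raySet_finite i₀).to_subtype
  obtain ⟨m₁, m₂, hne, heq⟩ := Finite.exists_ne_map_eq_of_infinite
    (fun m : ℕ => (⟨rayU hS hgen m i₀, ⟨m, rfl⟩⟩ : ↥(raySet hS hgen i₀)))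
  have heq' : rayU hS hgen m₁ i₀ = rayU hS hgen m₂ i₀ := by
    simpa using congrArg Subtype.val heq
  -- wlog m < m'
  obtain ⟨m, m', hmm', hmeq⟩ : ∃ m m', m < m' ∧
      rayU hS hgen m i₀ = rayU hS hgen m' i₀ := by
    rcases lt_or_gt_of_ne hne with h | h
    · exact ⟨m₁, m₂, h, heq'⟩
    · exact ⟨m₂, m₁, h, heq'.symm⟩
  set P := m' - m with hP
  set M := m + i₀ with hM
  have hPpos : 0 < P := by omega
  -- single-letter periodicity
  have hstep : ∀ t, M ≤ t → sg hS hgen t 1 = sg hS hgen (t + P) 1 := by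
    intro t ht
    have hj : i₀ ≤ t - m := by omega
    have e1 : rayU hS hgen m (t - m) = rayU hS hgen m' (t - m) := hchain m m' hmeq _ hj
    have e2 : rayU hS hgen m (t - m + 1) = rayU hS hgen m' (t - m + 1) := hchain m m' hmeq _ (by omega)
    have s1 : sg hS hgen m (t - m) = sg hS hgen m' (t - m) := by rw [sg_nf, e1, ← sg_nf]
    have s2 : sg hS hgen m (t - m + 1) = sg hS hgen m' (t - m + 1) := by rw [sg_nf, e2, ← sg_nf]
    have a1 : sg hS hgen m (t - m + 1) = sg hS hgen m (t - m) ++ sg hS hgen (m + (t - m)) 1 :=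
      sg_add m (t - m) 1
    have a2 : sg hS hgen m' (t - m + 1) = sg hS hgen m' (t - m) ++ sg hS hgen (m' + (t - m)) 1 :=
      sg_add m' (t - m) 1
    have key : sg hS hgen (m + (t - m)) 1 = sg hS hgen (m' + (t - m)) 1 := by
      apply List.append_cancel_left (as := sg hS hgen m (t - m))
      rw [← a1, s2, a2, s1]
    have em : m + (t - m) = t := by omega
    have em' : m' + (t - m) = t + P := by omega
    rw [em, em'] at key
    exact key
  -- iterated periodicity
  have hstepr : ∀ r t, M ≤ t → sg hS hgen t 1 = sg hS hgen (t + r * P) 1 := by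
    intro r
    induction r with
    | zero => intro t _; simp
    | succ r ih =>
        intro t ht
        have h1 := ih t ht
        have h2 := hstep (t + r * P) (by omega)
        have h3 : t + r * P + P = t + (r + 1) * P := by ring
        rw [h1, h2, h3]
  -- segments rebuilt from letters
  have hseg_ext : ∀ j t t', (∀ s, s < j → sg hS hgen (t + s) 1 = sg hS hgen (t' + s) 1) →
      sg hS hgen t j = sg hS hgen t' j := by
    intro j
    induction j with
    | zero =>
        intro t t' _
        have h1 : (sg hS hgen t 0).length = 0 := sg_len t 0
        have h2 : (sg hS hgen t' 0).length = 0 := sg_len t' 0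
        rw [List.eq_nil_of_length_eq_zero h1, List.eq_nil_of_length_eq_zero h2]
    | succ j ih =>
        intro t t' hlet
        rw [sg_add t j 1, sg_add t' j 1, ih t t' (fun s hs => hlet s (by omega)),
          hlet j (by omega)]
  -- the periodic segments
  have hrep : ∀ r, sg hS hgen (M + r * P) P = sg hS hgen M P := by
    intro r
    refine hseg_ext P _ _ (fun s hs => ?_)
    have h1 := hstepr r (M + s) (by omega)
    have h2 : M + s + r * P = M + r * P + s := by omega
    rw [h2] at h1
    exact h1.symm
  -- powers
  set V := rayU hS hgen M P with hV
  have hpow : ∀ r : ℕ, rayU hS hgen M (r * P) = V ^ r := by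
    intro r
    induction r with
    | zero =>
        simp only [Nat.zero_mul, pow_zero]
        show (sg hS hgen M 0).prod = 1
        rw [List.eq_nil_of_length_eq_zero (sg_len M 0), List.prod_nil]
    | succ r ih =>
        have h1 : (r + 1) * P = r * P + P := by ring
        rw [h1, rayU_add, ih, pow_succ]
        congr 1
        show (sg hS hgen (M + r * P) P).prod = V
        rw [hrep r]
        rfl
  refine ⟨V, P, hPpos, fun r => ?_⟩
  rw [← hpow r, wordLength_rayU]

end NF


/-! ### Growth counting -/

section Counting

variable {S : Set Γ} (hS : S.Finite) (hgen : Subgroup.closure S = ⊤)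

include hS hgen in
theorem ball_eq_growth (n : ℕ) :
    ({g : Γ | wordLength S g ≤ n}).ncard = growth S ((n : ℝ) + 1) := by
  have hset : {g : Γ | (wordLength S g : ℝ) < (n : ℝ) + 1} = {g : Γ | wordLength S g ≤ n} := by
    ext g
    simp only [Set.mem_setOf_eq]
    rw [show ((n : ℝ) + 1) = ((n + 1 : ℕ) : ℝ) by push_cast; ring, Nat.cast_lt]
    exact Nat.lt_succ_iff
  unfold growth
  rw [hset, Nat.card_coe_set_eq]

include hS hgen in
theorem exists_sphere_bound (a b : ℝ)
    (hlin : ∀ r : ℝ, 0 < r → (growth S r : ℝ) ≤ a * r + b) :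
    ∃ C : ℕ, ∀ N, ∃ i, N ≤ i ∧ {g : Γ | wordLength S g = i}.ncard ≤ C := by
  classical
  refine ⟨⌈a⌉₊, fun N => ?_⟩
  by_contra hcon
  push_neg at hcon
  set C := ⌈a⌉₊ with hCdef
  set K := ⌈a * (N + 1) + b⌉₊ + 1 with hKdef
  have hSphfin : ∀ i : ℕ, ({g : Γ | wordLength S g = i}).Finite := fun i =>
    (finite_ball hS hgen i).subset (fun g hg => le_of_eq hg)
  set Sf : ℕ → Finset Γ := fun i => (hSphfin i).toFinset with hSf
  set Bf : Finset Γ := (finite_ball hS hgen (N + K)).toFinset with hBf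
  have hsub : (Finset.Ico N (N + K)).biUnion Sf ⊆ Bf := by
    intro g hg
    simp only [Finset.mem_biUnion, Finset.mem_Ico, hSf, Set.Finite.mem_toFinset,
      Set.mem_setOf_eq] at hg
    obtain ⟨i, ⟨hNi, hiK⟩, hgi⟩ := hg
    simp only [hBf, Set.Finite.mem_toFinset, Set.mem_setOf_eq]
    omega
  have hdisj : ∀ i ∈ Finset.Ico N (N + K), ∀ j ∈ Finset.Ico N (N + K), i ≠ j →
      Disjoint (Sf i) (Sf j) := by
    intro i _ j _ hij
    rw [Finset.disjoint_left]
    intro g hgi hgj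
    simp only [hSf, Set.Finite.mem_toFinset, Set.mem_setOf_eq] at hgi hgj
    omega
  have hcardsum : ((Finset.Ico N (N + K)).biUnion Sf).card
      = ∑ i ∈ Finset.Ico N (N + K), (Sf i).card := Finset.card_biUnion hdisj
  have hlower : K * (C + 1) ≤ ∑ i ∈ Finset.Ico N (N + K), (Sf i).card := by
    have h1 : ∀ i ∈ Finset.Ico N (N + K), C + 1 ≤ (Sf i).card := by
      intro i hi
      simp only [Finset.mem_Ico] at hi
      have h2 := hcon i hi.1
      rw [← Set.ncard_eq_toFinset_card _ (hSphfin i)]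
      omega
    calc K * (C + 1) = (Finset.Ico N (N + K)).card * (C + 1) := by
          rw [Nat.card_Ico]; congr 1; omega
    _ = (Finset.Ico N (N + K)).card • (C + 1) := by rw [smul_eq_mul]
    _ ≤ _ := Finset.card_nsmul_le_sum _ _ _ h1
  have hupper : (Bf.card : ℝ) ≤ a * (N + K + 1) + b := by
    have h1 : Bf.card = ({g : Γ | wordLength S g ≤ N + K}).ncard :=
      (Set.ncard_eq_toFinset_card _ _).symm
    rw [h1, ball_eq_growth hS hgen (N + K)]
    have h2 := hlin ((N + K : ℕ) + 1) (by positivity)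
    calc (growth S (((N + K : ℕ) : ℝ) + 1) : ℝ) ≤ a * (((N + K : ℕ) : ℝ) + 1) + b := h2
    _ = a * (N + K + 1) + b := by push_cast; ring
  have hchain : (K * (C + 1) : ℝ) ≤ a * (N + K + 1) + b := by
    have h1 : (K * (C + 1) : ℕ) ≤ Bf.card :=
      le_trans hlower (by rw [← hcardsum]; exact Finset.card_le_card hsub)
    calc (K * (C + 1) : ℝ) = ((K * (C + 1) : ℕ) : ℝ) := by push_cast; ring
    _ ≤ (Bf.card : ℝ) := by exact_mod_cast h1
    _ ≤ _ := hupper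
  have hCa : a ≤ (C : ℝ) := Nat.le_ceil a
  have hKa : a * (N + 1) + b + 1 ≤ (K : ℝ) := by
    have := Nat.le_ceil (a * (N + 1) + b)
    push_cast [hKdef]
    linarith
  have hK0 : (0:ℝ) ≤ K := by positivity
  nlinarith [mul_le_mul_of_nonneg_left hCa hK0]

include hS hgen in
theorem zpowers_index_ne_zero (a b : ℝ)
    (hlin : ∀ r : ℝ, 0 < r → (growth S r : ℝ) ≤ a * r + b)
    {V : Γ} {P : ℕ} (hP : 0 < P) (hV : ∀ r : ℕ, wordLength S (V ^ r) = r * P) :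
    (Subgroup.zpowers V).index ≠ 0 := by
  classical
  intro hzero
  rw [Subgroup.index_eq_card] at hzero
  have hinf : Infinite (Γ ⧸ Subgroup.zpowers V) := by
    rcases Nat.card_eq_zero.1 hzero with h | h
    · exact absurd (inferInstance : Nonempty (Γ ⧸ Subgroup.zpowers V)) (not_nonempty_iff.2 h)
    · exact h
  set k := ⌈a * P⌉₊ + 1 with hkdef
  obtain ⟨T, hT⟩ := Infinite.exists_subset_card_eq (Γ ⧸ Subgroup.zpowers V) k
  set m₀ := T.sup fun q => wordLength S q.out with hm₀
  have hcount : ∀ N : ℕ, k * (N + 1) ≤ ({g : Γ | wordLength S g ≤ m₀ + N * P}).ncard := by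
    intro N
    set f : (Γ ⧸ Subgroup.zpowers V) × ℕ → Γ := fun p => p.1.out * V ^ p.2 with hf
    have hinj : Set.InjOn f ↑(T ×ˢ Finset.range (N + 1)) := by
      rintro ⟨q, j⟩ _ ⟨q', j'⟩ _ heq
      simp only [hf] at heq
      have hmem : ∀ (q₁ : Γ ⧸ Subgroup.zpowers V) (j₁ : ℕ),
          (QuotientGroup.mk (q₁.out * V ^ j₁) : Γ ⧸ Subgroup.zpowers V) = q₁ := by
        intro q₁ j₁
        have h1 : (QuotientGroup.mk (q₁.out * V ^ j₁) : Γ ⧸ Subgroup.zpowers V)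
            = QuotientGroup.mk q₁.out := by
          rw [QuotientGroup.eq]
          have hsimp : (q₁.out * V ^ j₁)⁻¹ * q₁.out = (V ^ j₁)⁻¹ := by group
          rw [hsimp]
          exact Subgroup.inv_mem _ (Subgroup.pow_mem _ (Subgroup.mem_zpowers V) j₁)
        rw [h1, QuotientGroup.out_eq']
      have hq : q = q' := by
        rw [← hmem q j, ← hmem q' j', heq]
      subst hq
      have hVj : V ^ j = V ^ j' := by
        exact mul_left_cancel heq
      have hwl : j * P = j' * P := by
        rw [← hV j, ← hV j', hVj]
      have : j = j' := Nat.eq_of_mul_eq_mul_right hP hwl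
      subst this
      rfl
    have himg : ↑((T ×ˢ Finset.range (N + 1)).image f) ⊆
        {g : Γ | wordLength S g ≤ m₀ + N * P} := by
      intro g hg
      simp only [Finset.coe_image, Set.mem_image, Finset.mem_coe, Finset.mem_product,
        Finset.mem_range] at hg
      obtain ⟨⟨q, j⟩, ⟨hqT, hj⟩, rfl⟩ := hg
      simp only [hf, Set.mem_setOf_eq]
      calc wordLength S (q.out * V ^ j) ≤ wordLength S q.out + wordLength S (V ^ j) :=
            wordLength_mul_le hgen _ _
      _ ≤ m₀ + N * P := by
          have h1 : wordLength S q.out ≤ m₀ :=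
            Finset.le_sup (f := fun q : Γ ⧸ Subgroup.zpowers V => wordLength S q.out) hqT
          have h2 : wordLength S (V ^ j) = j * P := hV j
          have h3 : j * P ≤ N * P := Nat.mul_le_mul_right P (by omega)
          omega
    calc k * (N + 1) = (T ×ˢ Finset.range (N + 1)).card := by
          rw [Finset.card_product, hT, Finset.card_range]
    _ = ((T ×ˢ Finset.range (N + 1)).image f).card := (Finset.card_image_iff.2 hinj).symm
    _ ≤ ({g : Γ | wordLength S g ≤ m₀ + N * P}).ncard := by
          rw [Set.ncard_eq_toFinset_card _ (finite_ball hS hgen (m₀ + N * P))]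
          apply Finset.card_le_card
          intro g hg
          simp only [Set.Finite.mem_toFinset]
          exact himg hg
  -- contradiction via N large
  set R := a * m₀ + a + b - a * P - 1 with hR
  set N := ⌈R⌉₊ + 1 with hN
  have hRN : R < (N : ℝ) := by
    have := Nat.le_ceil R
    push_cast [hN]
    linarith
  have hcN : ((k * (N + 1) : ℕ) : ℝ) ≤ a * (m₀ + N * P + 1) + b := by
    have h1 := hcount N
    have h2 : (({g : Γ | wordLength S g ≤ m₀ + N * P}).ncard : ℝ)
        ≤ a * ((m₀ + N * P : ℕ) + 1) + b := by
      rw [ball_eq_growth hS hgen (m₀ + N * P)]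
      exact hlin _ (by positivity)
    calc ((k * (N + 1) : ℕ) : ℝ) ≤ (({g : Γ | wordLength S g ≤ m₀ + N * P}).ncard : ℝ) := by
          exact_mod_cast h1
    _ ≤ a * ((m₀ + N * P : ℕ) + 1) + b := h2
    _ = a * (m₀ + N * P + 1) + b := by push_cast; ring
  have hka : a * P + 1 ≤ (k : ℝ) := by
    have := Nat.le_ceil (a * P)
    push_cast [hkdef]
    linarith
  have hN0 : (0:ℝ) ≤ (N:ℝ) + 1 := by positivity
  have e1 : (a * P + 1) * ((N:ℝ) + 1) ≤ (k : ℝ) * ((N:ℝ) + 1) :=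
    mul_le_mul_of_nonneg_right hka hN0
  have e2 : ((k * (N + 1) : ℕ) : ℝ) = (k : ℝ) * ((N:ℝ) + 1) := by push_cast; ring
  rw [e2] at hcN
  nlinarith [e1, hcN, hRN]

end Counting

theorem zpowers_equiv {V : Γ} (hV : ∀ z : ℕ, 0 < z → V ^ z ≠ 1) :
    Nonempty (↥(Subgroup.zpowers V) ≃* Multiplicative ℤ) := by
  have hz1 : ∀ z : ℤ, V ^ z = 1 → z = 0 := by
    intro z hz
    by_contra hne
    have habs : 0 < z.natAbs := Int.natAbs_pos.2 hne
    rcases Int.natAbs_eq z with h | h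
    · refine hV z.natAbs habs ?_
      rw [← zpow_natCast, ← h, hz]
    · refine hV z.natAbs habs ?_
      have hzz : V ^ (z.natAbs : ℤ) = (V ^ z)⁻¹ := by
        conv_rhs => rw [h]
        rw [zpow_neg, inv_inv]
      rw [← zpow_natCast, hzz, hz, inv_one]
  set φ : Multiplicative ℤ →* ↥(Subgroup.zpowers V) :=
    { toFun := fun z => ⟨V ^ (Multiplicative.toAdd z),
        Subgroup.zpow_mem _ (Subgroup.mem_zpowers V) _⟩,
      map_one' := by
        ext
        simp,
      map_mul' := fun z w => by
        ext
        simp [zpow_add] } with hφ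
  have hbij : Function.Bijective φ := by
    constructor
    · intro z w h
      have h1 : V ^ (Multiplicative.toAdd z) = V ^ (Multiplicative.toAdd w) := by
        simpa [hφ] using congrArg Subtype.val h
      have h2 : V ^ (Multiplicative.toAdd z - Multiplicative.toAdd w) = 1 := by
        rw [zpow_sub, h1, mul_inv_cancel]
      have h3 := hz1 _ h2
      have h4 : Multiplicative.toAdd z = Multiplicative.toAdd w := by omega
      exact Multiplicative.toAdd.injective h4
    · rintro ⟨g, hg⟩
      obtain ⟨z, hz⟩ := Subgroup.mem_zpowers_iff.1 hg
      exact ⟨Multiplicative.ofAdd z, Subtype.ext (by simp [hφ, hz])⟩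
  exact ⟨(MulEquiv.ofBijective φ hbij).symm⟩

end S17

/-- An infinite finitely generated group whose growth function is bounded by a
linear function is virtually infinite cyclic. -/
theorem statement_17 {G : Type*} [Group G] [Infinite G]
    (S : Set G) (hSfin : S.Finite) (hSgen : Subgroup.closure S = ⊤)
    (a b : ℝ) (hlin : ∀ r : ℝ, 0 < r → (growth S r : ℝ) ≤ a * r + b) :
    ∃ Z : Subgroup G, Z.index ≠ 0 ∧ Nonempty (Z ≃* Multiplicative ℤ) := by
  classical
  letI : LinearOrder G := @linearOrderOfSTO G WellOrderingRel _ (Classical.decRel _)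
  obtain ⟨C, hC⟩ := S17.exists_sphere_bound hSfin hSgen a b hlin
  obtain ⟨V, P, hP, hVl⟩ := S17.exists_undistorted (hS := hSfin) (hgen := hSgen) hC
  have hne : ∀ z : ℕ, 0 < z → V ^ z ≠ 1 := by
    intro z hz h1
    have h2 := hVl z
    rw [h1, S17.wordLength_one] at h2
    have h3 : 0 < z * P := Nat.mul_pos hz hP
    omega
  exact ⟨Subgroup.zpowers V, S17.zpowers_index_ne_zero hSfin hSgen a b hlin hP hVl,
    S17.zpowers_equiv hne⟩

end
end
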